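/- arXiv:0907.1880 — 7 statements merged into one kernel-verified Lean document; each statement's English description precedes it below -/
import Mathlib

section
/- Let (A, μ, Δ, α, R) be a cobraided Hom-bialgebra over a commutative ring k. Then for all x, y, z ∈ A, the first operator quantum Hom-Yang-Baxter equation holds: Σ R(x₁ ⊗ α(y₁)) R(x₂ ⊗ α(z₁)) R(y₂ ⊗ z₂) = Σ R(y₁ ⊗ z₁) R(x₁ ⊗ α(z₂)) R(x₂ ⊗ α(y₂)), where the sums run over the Sweedler components of Δ(x), Δ(y), Δ(z). -/
open TensorProduct

/-- The axioms of a Hom-bialgebra (no unit or counit assumed):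
multiplicativity and comultiplicativity of the twisting map `α`,
Hom-associativity, Hom-coassociativity, and the compatibility
`Δ(xy) = Σ x₁y₁ ⊗ x₂y₂` (stated via arbitrary finite representations of the
Sweedler sums). -/
def IsHomBialgebra (k : Type*) {A : Type*} [CommRing k] [AddCommGroup A] [Module k A]
    (μ : A →ₗ[k] A →ₗ[k] A) (Δ : A →ₗ[k] A ⊗[k] A) (α : A →ₗ[k] A) : Prop :=
  (∀ x y : A, α (μ x y) = μ (α x) (α y)) ∧
  (∀ x y z : A, μ (α x) (μ y z) = μ (μ x y) (α z)) ∧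
  (TensorProduct.map α α ∘ₗ Δ = Δ ∘ₗ α) ∧
  (TensorProduct.map α Δ ∘ₗ Δ =
    (TensorProduct.assoc k A A A).toLinearMap ∘ₗ TensorProduct.map Δ α ∘ₗ Δ) ∧
  (∀ (x y : A) (m n : ℕ) (x1 x2 : Fin m → A) (y1 y2 : Fin n → A),
    Δ x = ∑ i, x1 i ⊗ₜ[k] x2 i → Δ y = ∑ j, y1 j ⊗ₜ[k] y2 j →
    Δ (μ x y) = ∑ i, ∑ j, μ (x1 i) (y1 j) ⊗ₜ[k] μ (x2 i) (y2 j))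

/-- A cobraided Hom-bialgebra: a Hom-bialgebra together with a bilinear form `R`
satisfying the three axioms (i), (ii), (iii), stated via arbitrary finite
representations of the Sweedler sums. -/
def IsCobraidedHomBialgebra (k : Type*) {A : Type*} [CommRing k] [AddCommGroup A] [Module k A]
    (μ : A →ₗ[k] A →ₗ[k] A) (Δ : A →ₗ[k] A ⊗[k] A) (α : A →ₗ[k] A)
    (R : A →ₗ[k] A →ₗ[k] k) : Prop :=
  IsHomBialgebra k μ Δ α ∧
  (∀ (x y z : A) (n : ℕ) (z1 z2 : Fin n → A), Δ z = ∑ i, z1 i ⊗ₜ[k] z2 i →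
    R (μ x y) (α z) = ∑ i, R (α x) (z1 i) * R (α y) (z2 i)) ∧
  (∀ (x y z : A) (n : ℕ) (x1 x2 : Fin n → A), Δ x = ∑ i, x1 i ⊗ₜ[k] x2 i →
    R (α x) (μ y z) = ∑ i, R (x1 i) (α z) * R (x2 i) (α y)) ∧
  (∀ (x y : A) (m n : ℕ) (x1 x2 : Fin m → A) (y1 y2 : Fin n → A),
    Δ x = ∑ i, x1 i ⊗ₜ[k] x2 i → Δ y = ∑ j, y1 j ⊗ₜ[k] y2 j →
    ∑ i, ∑ j, R (x2 i) (y2 j) • μ (y1 j) (x1 i)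
      = ∑ i, ∑ j, R (x1 i) (y1 j) • μ (x2 i) (y2 j))

/-- A (classical) cobraided bialgebra, without unit, counit, or invertibility of `R`. -/
def IsCobraidedBialgebra (k : Type*) {A : Type*} [CommRing k] [AddCommGroup A] [Module k A]
    (μ : A →ₗ[k] A →ₗ[k] A) (Δ : A →ₗ[k] A ⊗[k] A) (R : A →ₗ[k] A →ₗ[k] k) : Prop :=
  (∀ x y z : A, μ (μ x y) z = μ x (μ y z)) ∧
  (TensorProduct.map LinearMap.id Δ ∘ₗ Δ =
    (TensorProduct.assoc k A A A).toLinearMap ∘ₗ TensorProduct.map Δ LinearMap.id ∘ₗ Δ) ∧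
  (∀ (x y : A) (m n : ℕ) (x1 x2 : Fin m → A) (y1 y2 : Fin n → A),
    Δ x = ∑ i, x1 i ⊗ₜ[k] x2 i → Δ y = ∑ j, y1 j ⊗ₜ[k] y2 j →
    Δ (μ x y) = ∑ i, ∑ j, μ (x1 i) (y1 j) ⊗ₜ[k] μ (x2 i) (y2 j)) ∧
  (∀ (x y z : A) (n : ℕ) (z1 z2 : Fin n → A), Δ z = ∑ i, z1 i ⊗ₜ[k] z2 i →
    R (μ x y) z = ∑ i, R x (z1 i) * R y (z2 i)) ∧
  (∀ (x y z : A) (n : ℕ) (x1 x2 : Fin n → A), Δ x = ∑ i, x1 i ⊗ₜ[k] x2 i →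
    R x (μ y z) = ∑ i, R (x1 i) z * R (x2 i) y) ∧
  (∀ (x y : A) (m n : ℕ) (x1 x2 : Fin m → A) (y1 y2 : Fin n → A),
    Δ x = ∑ i, x1 i ⊗ₜ[k] x2 i → Δ y = ∑ j, y1 j ⊗ₜ[k] y2 j →
    ∑ i, ∑ j, R (x2 i) (y2 j) • μ (y1 j) (x1 i)
      = ∑ i, ∑ j, R (x1 i) (y1 j) • μ (x2 i) (y2 j))

/-- A braided (quasi-triangular) Hom-bialgebra, with `R ∈ A ⊗ A`. -/
def IsBraidedHomBialgebra (k : Type*) {A : Type*} [CommRing k] [AddCommGroup A] [Module k A]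
    (μ : A →ₗ[k] A →ₗ[k] A) (Δ : A →ₗ[k] A ⊗[k] A) (α : A →ₗ[k] A)
    (Rel : A ⊗[k] A) : Prop :=
  IsHomBialgebra k μ Δ α ∧
  (∀ (n : ℕ) (s t : Fin n → A), Rel = ∑ i, s i ⊗ₜ[k] t i →
    TensorProduct.map Δ α Rel = ∑ i, ∑ j, (α (s i) ⊗ₜ[k] α (s j)) ⊗ₜ[k] μ (t i) (t j)) ∧
  (∀ (n : ℕ) (s t : Fin n → A), Rel = ∑ i, s i ⊗ₜ[k] t i →
    TensorProduct.map α Δ Rel = ∑ i, ∑ j, μ (s i) (s j) ⊗ₜ[k] (α (t j) ⊗ₜ[k] α (t i))) ∧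
  (∀ (x : A) (m n : ℕ) (x1 x2 : Fin m → A) (s t : Fin n → A),
    Δ x = ∑ i, x1 i ⊗ₜ[k] x2 i → Rel = ∑ i, s i ⊗ₜ[k] t i →
    ∑ i, ∑ j, μ (x2 i) (s j) ⊗ₜ[k] μ (x1 i) (t j)
      = ∑ i, ∑ j, μ (s j) (x1 i) ⊗ₜ[k] μ (t j) (x2 i))

/-- The convolution-type product on the dual induced by a comultiplication:
`⟨Δ*(φ ⊗ ψ), x⟩ = Σ φ(x₁) ψ(x₂)`. -/
noncomputable def deltaStar (k : Type*) {A : Type*} [CommRing k] [AddCommGroup A] [Module k A]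
    (Δ : A →ₗ[k] A ⊗[k] A) (φ ψ : Module.Dual k A) : Module.Dual k A :=
  TensorProduct.lift ((LinearMap.mul k k).compl₁₂ φ ψ) ∘ₗ Δ

/-- The bilinear version of `deltaStar`, `Δ* : A* →ₗ A* →ₗ A*`. -/
noncomputable def deltaStarBil (k : Type*) {A : Type*} [CommRing k] [AddCommGroup A] [Module k A]
    (Δ : A →ₗ[k] A ⊗[k] A) :
    Module.Dual k A →ₗ[k] Module.Dual k A →ₗ[k] Module.Dual k A :=
  TensorProduct.curry (Δ.dualMap ∘ₗ TensorProduct.dualDistrib k A A)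

/-- The dual comultiplication `μ* : A* → A* ⊗ A*` of a multiplication `μ` on a
finite free module, determined by `⟨μ*(φ), x ⊗ y⟩ = φ(xy)`. -/
noncomputable def mulStar (k : Type*) {A : Type*} [CommRing k] [AddCommGroup A] [Module k A]
    [Module.Finite k A] [Module.Free k A] (μ : A →ₗ[k] A →ₗ[k] A) :
    Module.Dual k A →ₗ[k] Module.Dual k A ⊗[k] Module.Dual k A :=
  (TensorProduct.dualDistribEquiv k A A).symm.toLinearMap ∘ₗ (TensorProduct.lift μ).dualMap

/-- The bilinear form `R̂` on the dual induced by an element `Rel = Σ sᵢ ⊗ tᵢ ∈ A ⊗ A`: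
`R̂(φ ⊗ ψ) = Σ φ(sᵢ) ψ(tᵢ)`. -/
noncomputable def rhat (k : Type*) {A : Type*} [CommRing k] [AddCommGroup A] [Module k A]
    (Rel : A ⊗[k] A) : Module.Dual k A →ₗ[k] Module.Dual k A →ₗ[k] k :=
  TensorProduct.curry (LinearMap.applyₗ (R := k) Rel ∘ₗ TensorProduct.dualDistrib k A A)

/-- A comodule `(M, α_M, ρ)` over a Hom-coassociative coalgebra `(A, Δ, α)`:
Hom-coassociativity and comultiplicativity of the structure map. -/
def IsComodule (k : Type*) {A M : Type*} [CommRing k] [AddCommGroup A] [Module k A]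
    [AddCommGroup M] [Module k M] (Δ : A →ₗ[k] A ⊗[k] A) (α : A →ₗ[k] A)
    (αM : M →ₗ[k] M) (ρ : M →ₗ[k] A ⊗[k] M) : Prop :=
  ((TensorProduct.assoc k A A M).toLinearMap ∘ₗ TensorProduct.map Δ αM ∘ₗ ρ
      = TensorProduct.map α ρ ∘ₗ ρ) ∧
  (TensorProduct.map α αM ∘ₗ ρ = ρ ∘ₗ αM)

/-- The map `B_{V,W} : V ⊗ W → W ⊗ V`, `B_{V,W}(v ⊗ w) = Σ R(w_A ⊗ v_A) w_W ⊗ v_V`,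
induced by comodule structure maps `ρ_V`, `ρ_W` and a bilinear form `R`. -/
noncomputable def Bmap (k : Type*) {A V W : Type*} [CommRing k] [AddCommGroup A] [Module k A]
    [AddCommGroup V] [Module k V] [AddCommGroup W] [Module k W]
    (R : A →ₗ[k] A →ₗ[k] k) (ρV : V →ₗ[k] A ⊗[k] V) (ρW : W →ₗ[k] A ⊗[k] W) :
    V ⊗[k] W →ₗ[k] W ⊗[k] V :=
  (TensorProduct.lid k (W ⊗[k] V)).toLinearMap
    ∘ₗ TensorProduct.map (TensorProduct.lift R) LinearMap.id
    ∘ₗ (TensorProduct.tensorTensorTensorComm k A W A V).toLinearMap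
    ∘ₗ TensorProduct.map ρW ρV
    ∘ₗ (TensorProduct.comm k V W).toLinearMap

/-- `B` is a solution of the Hom-Yang-Baxter equation for `(V, αV)`. -/
def IsHYBESolution (k : Type*) {V : Type*} [CommRing k] [AddCommGroup V] [Module k V]
    (αV : V →ₗ[k] V) (B : V ⊗[k] V →ₗ[k] V ⊗[k] V) : Prop :=
  (B ∘ₗ TensorProduct.map αV αV = TensorProduct.map αV αV ∘ₗ B) ∧
  ((TensorProduct.assoc k V V V).symm.toLinearMap
      ∘ₗ TensorProduct.map αV B
      ∘ₗ (TensorProduct.assoc k V V V).toLinearMap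
      ∘ₗ TensorProduct.map B αV
      ∘ₗ (TensorProduct.assoc k V V V).symm.toLinearMap
      ∘ₗ TensorProduct.map αV B
      ∘ₗ (TensorProduct.assoc k V V V).toLinearMap
    = TensorProduct.map B αV
      ∘ₗ (TensorProduct.assoc k V V V).symm.toLinearMap
      ∘ₗ TensorProduct.map αV B
      ∘ₗ (TensorProduct.assoc k V V V).toLinearMap
      ∘ₗ TensorProduct.map B αV)

/-- A (classical, possibly non-unital non-counital) bialgebra. -/
def IsBialgebraNC (k : Type*) {H : Type*} [CommRing k] [AddCommGroup H] [Module k H]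
    (μ : H →ₗ[k] H →ₗ[k] H) (Δ : H →ₗ[k] H ⊗[k] H) : Prop :=
  (∀ x y z : H, μ (μ x y) z = μ x (μ y z)) ∧
  (TensorProduct.map LinearMap.id Δ ∘ₗ Δ =
    (TensorProduct.assoc k H H H).toLinearMap ∘ₗ TensorProduct.map Δ LinearMap.id ∘ₗ Δ) ∧
  (∀ (x y : H) (m n : ℕ) (x1 x2 : Fin m → H) (y1 y2 : Fin n → H),
    Δ x = ∑ i, x1 i ⊗ₜ[k] x2 i → Δ y = ∑ j, y1 j ⊗ₜ[k] y2 j →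
    Δ (μ x y) = ∑ i, ∑ j, μ (x1 i) (y1 j) ⊗ₜ[k] μ (x2 i) (y2 j))

/-! Evaluate `R (α x) ·` on both sides of axiom (iii) for `y` and `z`: axiom (ii) splits each
`R (α x) (a b)` into `Σ R (x₁, α b) R (x₂, α a)`, which turns the two sides of (iii) into the two
sides of the quantum Hom-Yang-Baxter equation. -/

lemma apply_alpha_sum_smul_mul {k A ι κ : Type*} [CommRing k] [AddCommGroup A] [Module k A]
    [Fintype ι] [Fintype κ] {μ : A →ₗ[k] A →ₗ[k] A} {α : A →ₗ[k] A} {R : A →ₗ[k] A →ₗ[k] k}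
    {x : A} {n : ℕ} {x1 x2 : Fin n → A}
    (hR : ∀ a b : A, R (α x) (μ a b) = ∑ i, R (x1 i) (α b) * R (x2 i) (α a))
    (c : ι → κ → k) (a b : ι → κ → A) :
    R (α x) (∑ j, ∑ l, c j l • μ (a j l) (b j l))
      = ∑ i, ∑ j, ∑ l, c j l * (R (x1 i) (α (b j l)) * R (x2 i) (α (a j l))) := by
  simp only [map_sum, map_smul, smul_eq_mul, hR, Finset.mul_sum]
  symm
  rw [Finset.sum_comm]
  exact Finset.sum_congr rfl fun j _ => Finset.sum_comm

/-- Theorem: first operator quantum Hom-Yang-Baxter equation.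
In a cobraided Hom-bialgebra `(A, μ, Δ, α, R)`,
`Σ R(x₁ ⊗ α(y₁)) R(x₂ ⊗ α(z₁)) R(y₂ ⊗ z₂) = Σ R(y₁ ⊗ z₁) R(x₁ ⊗ α(z₂)) R(x₂ ⊗ α(y₂))`. -/
theorem first_operator_QHYBE
    (k : Type*) {A : Type*} [CommRing k] [AddCommGroup A] [Module k A]
    (μ : A →ₗ[k] A →ₗ[k] A) (Δ : A →ₗ[k] A ⊗[k] A) (α : A →ₗ[k] A)
    (R : A →ₗ[k] A →ₗ[k] k)
    (h : IsCobraidedHomBialgebra k μ Δ α R)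
    (x y z : A) (nx ny nz : ℕ)
    (x1 x2 : Fin nx → A) (y1 y2 : Fin ny → A) (z1 z2 : Fin nz → A)
    (hx : Δ x = ∑ i, x1 i ⊗ₜ[k] x2 i)
    (hy : Δ y = ∑ j, y1 j ⊗ₜ[k] y2 j)
    (hz : Δ z = ∑ l, z1 l ⊗ₜ[k] z2 l) :
    ∑ i, ∑ j, ∑ l,
        R (x1 i) (α (y1 j)) * R (x2 i) (α (z1 l)) * R (y2 j) (z2 l)
      = ∑ i, ∑ j, ∑ l,
          R (y1 j) (z1 l) * R (x1 i) (α (z2 l)) * R (x2 i) (α (y2 j)) := by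
  obtain ⟨-, -, hii, hiii⟩ := h
  have hR := fun a b => hii x a b nx x1 x2 hx
  have hpaired := congrArg (R (α x)) (hiii y z ny nz y1 y2 z1 z2 hy hz)
  rw [apply_alpha_sum_smul_mul hR, apply_alpha_sum_smul_mul hR] at hpaired
  convert hpaired using 4 <;> ring
end

section
/- Let (A, μ, Δ, α, R) be a cobraided Hom-bialgebra over a commutative ring k. Then for all x, y, z ∈ A, the second operator quantum Hom-Yang-Baxter equation holds: Σ R(x₁ ⊗ y₁) R(α(x₂) ⊗ z₁) R(α(y₂) ⊗ z₂) = Σ R(α(y₁) ⊗ z₁) R(α(x₁) ⊗ z₂) R(x₂ ⊗ y₂), where the sums run over the Sweedler components of Δ(x), Δ(y), Δ(z). -/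
open TensorProduct

namespace IsCobraidedHomBialgebra

variable {k A : Type*} [CommRing k] [AddCommGroup A] [Module k A]
  {μ : A →ₗ[k] A →ₗ[k] A} {Δ : A →ₗ[k] A ⊗[k] A} {α : A →ₗ[k] A} {R : A →ₗ[k] A →ₗ[k] k}

theorem R_mul_alpha (h : IsCobraidedHomBialgebra k μ Δ α R) (a b : A) {z : A} {n : ℕ}
    {z1 z2 : Fin n → A} (hz : Δ z = ∑ l, z1 l ⊗ₜ[k] z2 l) :
    R (μ a b) (α z) = ∑ l, R (α a) (z1 l) * R (α b) (z2 l) :=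
  h.2.1 a b z n z1 z2 hz

theorem sum_R_mul_R_mul_comm (h : IsCobraidedHomBialgebra k μ Δ α R) {x y : A} {m n : ℕ}
    {x1 x2 : Fin m → A} {y1 y2 : Fin n → A}
    (hx : Δ x = ∑ i, x1 i ⊗ₜ[k] x2 i) (hy : Δ y = ∑ j, y1 j ⊗ₜ[k] y2 j) (w : A) :
    ∑ i, ∑ j, R (x2 i) (y2 j) * R (μ (y1 j) (x1 i)) w
      = ∑ i, ∑ j, R (x1 i) (y1 j) * R (μ (x2 i) (y2 j)) w := by
  simpa only [map_sum, map_smul, smul_eq_mul, LinearMap.flip_apply] using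
    congrArg (R.flip w) (h.2.2.2 x y m n x1 x2 y1 y2 hx hy)

end IsCobraidedHomBialgebra

/-- Theorem: second operator quantum Hom-Yang-Baxter equation.
In a cobraided Hom-bialgebra `(A, μ, Δ, α, R)`,
`Σ R(x₁ ⊗ y₁) R(α(x₂) ⊗ z₁) R(α(y₂) ⊗ z₂) = Σ R(α(y₁) ⊗ z₁) R(α(x₁) ⊗ z₂) R(x₂ ⊗ y₂)`. -/
theorem second_operator_QHYBE
    (k : Type*) {A : Type*} [CommRing k] [AddCommGroup A] [Module k A]
    (μ : A →ₗ[k] A →ₗ[k] A) (Δ : A →ₗ[k] A ⊗[k] A) (α : A →ₗ[k] A)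
    (R : A →ₗ[k] A →ₗ[k] k)
    (h : IsCobraidedHomBialgebra k μ Δ α R)
    (x y z : A) (nx ny nz : ℕ)
    (x1 x2 : Fin nx → A) (y1 y2 : Fin ny → A) (z1 z2 : Fin nz → A)
    (hx : Δ x = ∑ i, x1 i ⊗ₜ[k] x2 i)
    (hy : Δ y = ∑ j, y1 j ⊗ₜ[k] y2 j)
    (hz : Δ z = ∑ l, z1 l ⊗ₜ[k] z2 l) :
    ∑ i, ∑ j, ∑ l,
        R (x1 i) (y1 j) * R (α (x2 i)) (z1 l) * R (α (y2 j)) (z2 l)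
      = ∑ i, ∑ j, ∑ l,
          R (α (y1 j)) (z1 l) * R (α (x1 i)) (z2 l) * R (x2 i) (y2 j) := by
  calc ∑ i, ∑ j, ∑ l, R (x1 i) (y1 j) * R (α (x2 i)) (z1 l) * R (α (y2 j)) (z2 l)
      = ∑ i, ∑ j, R (x1 i) (y1 j) * R (μ (x2 i) (y2 j)) (α z) := by
        simp only [h.R_mul_alpha _ _ hz, Finset.mul_sum, mul_assoc]
    _ = ∑ i, ∑ j, R (x2 i) (y2 j) * R (μ (y1 j) (x1 i)) (α z) :=
        (h.sum_R_mul_R_mul_comm hx hy _).symm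
    _ = ∑ i, ∑ j, ∑ l, R (α (y1 j)) (z1 l) * R (α (x1 i)) (z2 l) * R (x2 i) (y2 j) := by
        simp only [h.R_mul_alpha _ _ hz, mul_comm (R (x2 _) (y2 _)), Finset.sum_mul]
end

section
/- Let (A, μ, Δ, R) be a cobraided bialgebra over a commutative ring k and α : A → A a k-linear map that is multiplicative (α(xy) = α(x)α(y)) and comultiplicative ((α ⊗ α)∘Δ = Δ∘α). Then A_α = (A, μ_α, Δ_α, α, R), with twisted multiplication μ_α = α ∘ μ and twisted comultiplication Δ_α = Δ ∘ α and the same bilinear form R, is a cobraided Hom-bialgebra. -/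
open TensorProduct

/-!
Each axiom of `A_α` is an axiom of `A` evaluated at `α`-images: multiplicativity lets `α` be
pulled out of products, and comultiplicativity turns a Sweedler representation of `Δ x` into
one of `Δ (α x)` by applying `α` to both legs.
-/

section Twist

variable {k A : Type*} [CommRing k] [AddCommGroup A] [Module k A]

theorem apply_eq_sum_tmul_of_map_comp_eq {Δ : A →ₗ[k] A ⊗[k] A} {f : A →ₗ[k] A}
    (hf : map f f ∘ₗ Δ = Δ ∘ₗ f) {x : A} {n : ℕ} {x1 x2 : Fin n → A}
    (hx : Δ x = ∑ i, x1 i ⊗ₜ[k] x2 i) :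
    Δ (f x) = ∑ i, f (x1 i) ⊗ₜ[k] f (x2 i) := by
  rw [← LinearMap.comp_apply Δ f, ← hf, LinearMap.comp_apply, hx, map_sum]
  simp only [TensorProduct.map_tmul]

theorem homAssoc_compr₂_of_assoc {μ : A →ₗ[k] A →ₗ[k] A} {α : A →ₗ[k] A}
    (hassoc : ∀ x y z : A, μ (μ x y) z = μ x (μ y z))
    (hmul : ∀ x y : A, α (μ x y) = μ (α x) (α y)) (x y z : A) :
    μ.compr₂ α (α x) (μ.compr₂ α y z) = μ.compr₂ α (μ.compr₂ α x y) (α z) := by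
  simp only [LinearMap.compr₂_apply, ← hmul, hassoc]

theorem homCoassoc_comp_of_coassoc {Δ : A →ₗ[k] A ⊗[k] A} {α : A →ₗ[k] A}
    (hcoassoc : map LinearMap.id Δ ∘ₗ Δ =
      (TensorProduct.assoc k A A A).toLinearMap ∘ₗ map Δ LinearMap.id ∘ₗ Δ)
    (hcomul : map α α ∘ₗ Δ = Δ ∘ₗ α) :
    map α (Δ ∘ₗ α) ∘ₗ Δ ∘ₗ α =
      (TensorProduct.assoc k A A A).toLinearMap ∘ₗ map (Δ ∘ₗ α) α ∘ₗ Δ ∘ₗ α := by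
  have hleft : map α (Δ ∘ₗ α) = map LinearMap.id Δ ∘ₗ map α α := by
    rw [← TensorProduct.map_comp, LinearMap.id_comp]
  have hright : map (Δ ∘ₗ α) α = map Δ LinearMap.id ∘ₗ map α α := by
    rw [← TensorProduct.map_comp, LinearMap.id_comp]
  calc map α (Δ ∘ₗ α) ∘ₗ Δ ∘ₗ α
      = map LinearMap.id Δ ∘ₗ (map α α ∘ₗ Δ) ∘ₗ α := by
        rw [hleft]; simp only [LinearMap.comp_assoc]
    _ = (map LinearMap.id Δ ∘ₗ Δ) ∘ₗ α ∘ₗ α := by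
        rw [hcomul]; simp only [LinearMap.comp_assoc]
    _ = ((TensorProduct.assoc k A A A).toLinearMap ∘ₗ map Δ LinearMap.id ∘ₗ Δ)
          ∘ₗ α ∘ₗ α := by
        rw [hcoassoc]
    _ = (TensorProduct.assoc k A A A).toLinearMap ∘ₗ map Δ LinearMap.id ∘ₗ
          (map α α ∘ₗ Δ) ∘ₗ α := by
        rw [hcomul]; simp only [LinearMap.comp_assoc]
    _ = (TensorProduct.assoc k A A A).toLinearMap ∘ₗ map (Δ ∘ₗ α) α ∘ₗ Δ ∘ₗ α := by
        rw [hright]; simp only [LinearMap.comp_assoc]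

theorem IsBialgebraNC.isHomBialgebra_twist {μ : A →ₗ[k] A →ₗ[k] A}
    {Δ : A →ₗ[k] A ⊗[k] A} (h : IsBialgebraNC k μ Δ) {α : A →ₗ[k] A}
    (hmul : ∀ x y : A, α (μ x y) = μ (α x) (α y))
    (hcomul : map α α ∘ₗ Δ = Δ ∘ₗ α) :
    IsHomBialgebra k (μ.compr₂ α) (Δ ∘ₗ α) α := by
  obtain ⟨hassoc, hcoassoc, hcompat⟩ := h
  refine ⟨fun x y ↦ congrArg α (hmul x y), homAssoc_compr₂_of_assoc hassoc hmul,
    by rw [← LinearMap.comp_assoc, hcomul], homCoassoc_comp_of_coassoc hcoassoc hcomul,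
    ?_⟩
  intro x y m n x1 x2 y1 y2 hx hy
  have hαx := apply_eq_sum_tmul_of_map_comp_eq hcomul hx
  have hαy := apply_eq_sum_tmul_of_map_comp_eq hcomul hy
  simp only [LinearMap.comp_apply, LinearMap.compr₂_apply]
  rw [hmul, hmul, hcompat _ _ m n _ _ _ _ hαx hαy]
  simp only [hmul]

end Twist

/-- Theorem 3.1: twisting a cobraided bialgebra along a bialgebra
endomorphism.  If `(A, μ, Δ, R)` is a cobraided bialgebra and `α` is a bialgebra
morphism, then `A_α = (A, α∘μ, Δ∘α, α, R)` is a cobraided Hom-bialgebra. -/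
theorem cobraided_twist
    (k : Type*) {A : Type*} [CommRing k] [AddCommGroup A] [Module k A]
    (μ : A →ₗ[k] A →ₗ[k] A) (Δ : A →ₗ[k] A ⊗[k] A) (R : A →ₗ[k] A →ₗ[k] k)
    (h : IsCobraidedBialgebra k μ Δ R)
    (α : A →ₗ[k] A)
    (hmul : ∀ x y : A, α (μ x y) = μ (α x) (α y))
    (hcomul : TensorProduct.map α α ∘ₗ Δ = Δ ∘ₗ α) :
    IsCobraidedHomBialgebra k (μ.compr₂ α) (Δ ∘ₗ α) α R := by
  obtain ⟨hassoc, hcoassoc, hcompat, hR_mul_left, hR_mul_right, hR_braid⟩ := h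
  refine ⟨IsBialgebraNC.isHomBialgebra_twist ⟨hassoc, hcoassoc, hcompat⟩ hmul hcomul,
    fun x y z n z1 z2 hz ↦ ?_, fun x y z n x1 x2 hx ↦ ?_,
    fun x y m n x1 x2 y1 y2 hx hy ↦ ?_⟩
  · rw [LinearMap.compr₂_apply, hmul]
    exact hR_mul_left _ _ _ n z1 z2 hz
  · rw [LinearMap.compr₂_apply, hmul]
    exact hR_mul_right _ _ _ n x1 x2 hx
  · simpa only [LinearMap.compr₂_apply, map_sum, map_smul] using
      congrArg α (hR_braid (α x) (α y) m n x1 x2 y1 y2 hx hy)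
end

section
/- Let (A, μ, Δ, α, R) be a cobraided Hom-bialgebra over a commutative ring k in which the linear map α : A → A is injective. Then for every integer n ≥ 1, the quintuple A^(n) = (A, μ, Δ, α, R^{αⁿ}), where R^{αⁿ} is the bilinear form defined by R^{αⁿ}(x ⊗ y) = R(αⁿ(x) ⊗ αⁿ(y)), is again a cobraided Hom-bialgebra. -/
open TensorProduct

/-- Theorem 5.1: twisting the Hom-cobraiding form by powers of an
injective `α`.  If `(A, μ, Δ, α, R)` is a cobraided Hom-bialgebra with `α`
injective, then `(A, μ, Δ, α, R∘(αⁿ ⊗ αⁿ))` is a cobraided Hom-bialgebra for all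
`n ≥ 1`. -/
theorem cobraided_twist_injective
    (k : Type*) {A : Type*} [CommRing k] [AddCommGroup A] [Module k A]
    (μ : A →ₗ[k] A →ₗ[k] A) (Δ : A →ₗ[k] A ⊗[k] A) (α : A →ₗ[k] A)
    (R : A →ₗ[k] A →ₗ[k] k)
    (h : IsCobraidedHomBialgebra k μ Δ α R)
    (hinj : Function.Injective α)
    (n : ℕ) (hn : 1 ≤ n) :
    IsCobraidedHomBialgebra k μ Δ α (R.compl₁₂ (α ^ n) (α ^ n)) := by
  obtain ⟨hH, h1, h2, h3⟩ := h
  obtain ⟨hαμ, hass, hαΔ, hcoass, hΔμ⟩ := hH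
  -- β = α^n commutes with μ
  have hpowμ : ∀ (m : ℕ) (x y : A), (α ^ m) (μ x y) = μ ((α ^ m) x) ((α ^ m) y) := by
    intro m
    induction m with
    | zero => intro x y; simp
    | succ p ih =>
      intro x y
      simp only [pow_succ, Module.End.mul_apply]
      rw [hαμ, ih]
  -- β = α^n commutes with Δ
  have hpowΔ : ∀ (m : ℕ) (x : A),
      Δ ((α ^ m) x) = TensorProduct.map (α ^ m) (α ^ m) (Δ x) := by
    intro m
    induction m with
    | zero =>
      intro x
      simp [Module.End.one_eq_id]
    | succ p ih =>
      intro x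
      have h1 : (α ^ (p + 1)) x = α ((α ^ p) x) := by
        rw [pow_succ']; rfl
      have h2 : Δ (α ((α ^ p) x)) = TensorProduct.map α α (Δ ((α ^ p) x)) :=
        (LinearMap.congr_fun hαΔ ((α ^ p) x)).symm
      rw [h1, h2, ih, pow_succ' α p, Module.End.mul_eq_comp, TensorProduct.map_comp]
      rfl
  -- α commutes with α^n
  have hcomm : ∀ x : A, α ((α ^ n) x) = (α ^ n) (α x) := by
    intro x
    have h1 : α * α ^ n = α ^ n * α := (pow_succ' α n).symm.trans (pow_succ α n)
    exact DFunLike.congr_fun h1 x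
  -- α^n is injective
  have hpowinj : Function.Injective ⇑(α ^ n) := by
    intro a b hab
    rw [Module.End.pow_apply, Module.End.pow_apply] at hab
    exact hinj.iterate n hab
  refine ⟨⟨hαμ, hass, hαΔ, hcoass, hΔμ⟩, ?_, ?_, ?_⟩
  · intro x y z m z1 z2 hz
    simp only [LinearMap.compl₁₂_apply]
    have hΔz : Δ ((α ^ n) z) = ∑ i, (α ^ n) (z1 i) ⊗ₜ[k] (α ^ n) (z2 i) := by
      rw [hpowΔ n z, hz, map_sum]
      simp [TensorProduct.map_tmul]
    have := h1 ((α ^ n) x) ((α ^ n) y) ((α ^ n) z) m (fun i => (α ^ n) (z1 i))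
      (fun i => (α ^ n) (z2 i)) hΔz
    rw [hpowμ n x y, ← hcomm z, this]
    simp only [hcomm]
  · intro x y z m x1 x2 hx
    simp only [LinearMap.compl₁₂_apply]
    have hΔx : Δ ((α ^ n) x) = ∑ i, (α ^ n) (x1 i) ⊗ₜ[k] (α ^ n) (x2 i) := by
      rw [hpowΔ n x, hx, map_sum]
      simp [TensorProduct.map_tmul]
    have := h2 ((α ^ n) x) ((α ^ n) y) ((α ^ n) z) m (fun i => (α ^ n) (x1 i))
      (fun i => (α ^ n) (x2 i)) hΔx
    rw [hpowμ n y z, ← hcomm x, this]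
    simp only [hcomm]
  · intro x y m m' x1 x2 y1 y2 hx hy
    simp only [LinearMap.compl₁₂_apply]
    apply hpowinj
    have hΔx : Δ ((α ^ n) x) = ∑ i, (α ^ n) (x1 i) ⊗ₜ[k] (α ^ n) (x2 i) := by
      rw [hpowΔ n x, hx, map_sum]
      simp [TensorProduct.map_tmul]
    have hΔy : Δ ((α ^ n) y) = ∑ i, (α ^ n) (y1 i) ⊗ₜ[k] (α ^ n) (y2 i) := by
      rw [hpowΔ n y, hy, map_sum]
      simp [TensorProduct.map_tmul]
    have key := h3 ((α ^ n) x) ((α ^ n) y) m m' (fun i => (α ^ n) (x1 i))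
      (fun i => (α ^ n) (x2 i)) (fun j => (α ^ n) (y1 j)) (fun j => (α ^ n) (y2 j)) hΔx hΔy
    simp only [map_sum, map_smul, hpowμ n]
    exact key
end

section
/- Let k be a field, (A, μ, Δ, α) a finite-dimensional Hom-bialgebra over k, and R ∈ A ⊗ A. Then (A, μ, Δ, α, R) is a braided Hom-bialgebra if and only if (A*, Δ*, μ*, α*, R̂) is a cobraided Hom-bialgebra, where A* = Hom(A, k) carries the dual Hom-bialgebra structure with multiplication Δ* (⟨Δ*(φ ⊗ ψ), x⟩ = Σ φ(x₁)ψ(x₂)), comultiplication μ* (⟨μ*(φ), x ⊗ y⟩ = φ(xy)), twisting map α* (α*(φ) = φ ∘ α), and where R̂ : A* ⊗ A* → k is the bilinear form R̂(φ ⊗ ψ) = Σ φ(s_i)ψ(t_i) for R = Σ s_i ⊗ t_i. -/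
open TensorProduct

/-!
Since `A` is finite free, `A* ⊗ A* ≃ (A ⊗ A)*` and the functionals `φ ⊗ ψ` (resp. `φ ⊗ ψ ⊗ χ`)
separate the points of `A ⊗ A` (resp. `A ⊗ A ⊗ A`). So each axiom on `R`, an identity in a tensor
power of `A`, is equivalent to the scalar identities obtained by pairing it with these functionals,
and these are the axioms on `R̂`: `R̂(Δ*(φ, ψ), α*χ)` is the pairing of `(Δ ⊗ α)(R)` with
`φ ⊗ ψ ⊗ χ`, the Sweedler sums over `μ*` collapse to values `χ(uv)` on products of partial
contractions `u, v` of `R`, and, `μ* ⊗ μ*` being the transpose of the factorwise product of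
`A ⊗ A`, axiom (iii) is the pairing of `τΔ(x) · R = R · Δ(x)`. The same transposition shows that
the dual of a Hom-bialgebra is a Hom-bialgebra.
-/

open Module

theorem TensorProduct.exists_eq_sum_tmul {R M N : Type*} [CommRing R] [AddCommGroup M]
    [Module R M] [AddCommGroup N] [Module R N] (t : M ⊗[R] N) :
    ∃ (n : ℕ) (a : Fin n → M) (b : Fin n → N), t = ∑ i, a i ⊗ₜ[R] b i := by
  obtain ⟨S, rfl⟩ := TensorProduct.exists_finset t
  refine ⟨S.card, fun i ↦ (S.equivFin.symm i : M × N).1, fun i ↦ (S.equivFin.symm i : M × N).2,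
    ?_⟩
  rw [← Finset.sum_coe_sort S, ← Equiv.sum_comp S.equivFin.symm]

theorem TensorProduct.map₂_sum_tmul_sum_tmul {R M N P M' N' P' : Type*} [CommRing R]
    [AddCommGroup M] [Module R M] [AddCommGroup N] [Module R N] [AddCommGroup P] [Module R P]
    [AddCommGroup M'] [Module R M'] [AddCommGroup N'] [Module R N'] [AddCommGroup P']
    [Module R P'] (f : M →ₗ[R] N →ₗ[R] P) (g : M' →ₗ[R] N' →ₗ[R] P') {m n : ℕ}
    (a : Fin m → M) (b : Fin m → M') (c : Fin n → N) (d : Fin n → N') :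
    map₂ f g (∑ i, a i ⊗ₜ[R] b i) (∑ j, c j ⊗ₜ[R] d j)
      = ∑ i, ∑ j, f (a i) (c j) ⊗ₜ g (b i) (d j) := by
  simp only [map_sum, LinearMap.coe_sum, Finset.sum_apply, map₂_apply_tmul]
  exact Finset.sum_comm

section Pairing

variable {R M N P M' N' : Type*} [CommRing R] [AddCommGroup M] [Module R M] [AddCommGroup N]
  [Module R N] [AddCommGroup P] [Module R P] [AddCommGroup M'] [Module R M'] [AddCommGroup N']
  [Module R N']

theorem Module.eq_of_dual_eval_comp_eq [Projective R M] {W : Type*} [AddCommMonoid W]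
    [Module R W] {Φ : W →ₗ[R] Dual R M} (hΦ : Function.Surjective Φ) {u v : M}
    (h : Dual.eval R M u ∘ₗ Φ = Dual.eval R M v ∘ₗ Φ) : u = v :=
  eval_apply_injective R <| LinearMap.ext fun f ↦ by
    obtain ⟨w, rfl⟩ := hΦ f
    exact LinearMap.congr_fun h w

theorem TensorProduct.dualDistrib_dualMap_tmul_dualMap (f : M' →ₗ[R] M) (g : N' →ₗ[R] N)
    (φ : Dual R M) (ψ : Dual R N) :
    dualDistrib R M' N' (f.dualMap φ ⊗ₜ g.dualMap ψ)
      = (map f g).dualMap (dualDistrib R M N (φ ⊗ₜ ψ)) :=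
  TensorProduct.ext' fun _ _ ↦ rfl

theorem TensorProduct.dualDistrib_map_dualMap (f : M' →ₗ[R] M) (g : N' →ₗ[R] N)
    (ξ : Dual R M ⊗[R] Dual R N) :
    dualDistrib R M' N' (map f.dualMap g.dualMap ξ) = (map f g).dualMap (dualDistrib R M N ξ) := by
  induction ξ using TensorProduct.induction_on with
  | zero => simp
  | tmul φ ψ => exact dualDistrib_dualMap_tmul_dualMap f g φ ψ
  | add ξ η hξ hη => simp only [map_add, hξ, hη]

theorem TensorProduct.dualDistrib_tmul_dualDistrib_comp_assoc (φ : Dual R M) (ψ : Dual R N)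
    (χ : Dual R P) :
    dualDistrib R M (N ⊗[R] P) (φ ⊗ₜ dualDistrib R N P (ψ ⊗ₜ χ))
        ∘ₗ (TensorProduct.assoc R M N P).toLinearMap
      = dualDistrib R (M ⊗[R] N) P (dualDistrib R M N (φ ⊗ₜ ψ) ⊗ₜ χ) :=
  TensorProduct.ext_threefold fun _ _ _ ↦ by simp [mul_assoc]

theorem TensorProduct.dualDistrib_lTensor_assoc_apply
    (ω : (Dual R M ⊗[R] Dual R N) ⊗[R] Dual R P) (m : M) (n : N) (p : P) :
    dualDistrib R M (N ⊗[R] P) ((dualDistrib R N P).lTensor _ (TensorProduct.assoc R _ _ _ ω))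
        (m ⊗ₜ (n ⊗ₜ p))
      = dualDistrib R (M ⊗[R] N) P ((dualDistrib R M N).rTensor _ ω) ((m ⊗ₜ n) ⊗ₜ p) := by
  induction ω using TensorProduct.induction_on with
  | zero => simp
  | tmul ξ χ =>
    induction ξ using TensorProduct.induction_on with
    | zero => simp
    | tmul φ ψ => simp [mul_assoc]
    | add ξ η hξ hη => simp only [add_tmul, map_add, LinearMap.add_apply, hξ, hη]
  | add ω ω' hω hω' => simp only [map_add, LinearMap.add_apply, hω, hω']

variable [Free R M] [Module.Finite R M] [Free R N] [Module.Finite R N] [Free R P]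
  [Module.Finite R P]

theorem TensorProduct.ext_dualDistrib {u v : M ⊗[R] N}
    (h : ∀ φ ψ, dualDistrib R M N (φ ⊗ₜ ψ) u = dualDistrib R M N (φ ⊗ₜ ψ) v) : u = v :=
  eq_of_dual_eval_comp_eq (Φ := dualDistrib R M N) (dualDistribEquiv R M N).surjective <|
    TensorProduct.ext' h

theorem TensorProduct.ext_dualDistrib_threefold {u v : (M ⊗[R] N) ⊗[R] P}
    (h : ∀ φ ψ χ, dualDistrib R (M ⊗[R] N) P (dualDistrib R M N (φ ⊗ₜ ψ) ⊗ₜ χ) u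
      = dualDistrib R (M ⊗[R] N) P (dualDistrib R M N (φ ⊗ₜ ψ) ⊗ₜ χ) v) : u = v :=
  eq_of_dual_eval_comp_eq (Φ := dualDistrib R (M ⊗[R] N) P ∘ₗ (dualDistrib R M N).rTensor _)
    ((dualDistribEquiv R (M ⊗[R] N) P).surjective.comp
      (LinearMap.rTensor_surjective _ (dualDistribEquiv R M N).surjective))
    (TensorProduct.ext_threefold fun φ ψ χ ↦ h φ ψ χ)

theorem TensorProduct.ext_dualDistrib_threefold' {u v : M ⊗[R] (N ⊗[R] P)}
    (h : ∀ φ ψ χ, dualDistrib R M (N ⊗[R] P) (φ ⊗ₜ dualDistrib R N P (ψ ⊗ₜ χ)) u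
      = dualDistrib R M (N ⊗[R] P) (φ ⊗ₜ dualDistrib R N P (ψ ⊗ₜ χ)) v) : u = v :=
  eq_of_dual_eval_comp_eq (Φ := dualDistrib R M (N ⊗[R] P) ∘ₗ (dualDistrib R N P).lTensor _)
    ((dualDistribEquiv R M (N ⊗[R] P)).surjective.comp
      (LinearMap.lTensor_surjective _ (dualDistribEquiv R N P).surjective))
    (TensorProduct.ext_threefold' fun φ ψ χ ↦ h φ ψ χ)

theorem TensorProduct.ext_dualDistrib_apply {ξ η : Dual R M ⊗[R] Dual R N}
    (h : ∀ m n, dualDistrib R M N ξ (m ⊗ₜ n) = dualDistrib R M N η (m ⊗ₜ n)) : ξ = η :=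
  (dualDistribEquiv R M N).injective (TensorProduct.ext' h)

theorem TensorProduct.ext_dualDistrib_lTensor_apply
    {ξ η : Dual R M ⊗[R] (Dual R N ⊗[R] Dual R P)}
    (h : ∀ m n p, dualDistrib R M (N ⊗[R] P) ((dualDistrib R N P).lTensor _ ξ) (m ⊗ₜ (n ⊗ₜ p))
      = dualDistrib R M (N ⊗[R] P) ((dualDistrib R N P).lTensor _ η) (m ⊗ₜ (n ⊗ₜ p))) : ξ = η :=
  ((dualDistribEquiv R M (N ⊗[R] P)).injective.comp
    ((dualDistribEquiv R N P).lTensor (Dual R M)).injective) (TensorProduct.ext_threefold' h)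

end Pairing

section DualHomBialgebra

variable {k A : Type*} [CommRing k] [AddCommGroup A] [Module k A]
  {μ : A →ₗ[k] A →ₗ[k] A} {Δ : A →ₗ[k] A ⊗[k] A} {α : A →ₗ[k] A}
  {Rel : A ⊗[k] A}

theorem deltaStarBil_apply (φ ψ : Dual k A) :
    deltaStarBil k Δ φ ψ = Δ.dualMap (dualDistrib k A A (φ ⊗ₜ ψ)) := rfl

theorem rhat_apply (φ ψ : Dual k A) :
    rhat k Rel φ ψ = dualDistrib k A A (φ ⊗ₜ ψ) Rel := rfl

theorem rhat_eq_apply_sum_smul_left {n : ℕ} {s t : Fin n → A}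
    (hRel : Rel = ∑ i, s i ⊗ₜ[k] t i) (φ ψ : Dual k A) :
    rhat k Rel φ ψ = ψ (∑ i, φ (s i) • t i) := by
  simp [rhat_apply, hRel]

theorem rhat_eq_apply_sum_smul_right {n : ℕ} {s t : Fin n → A}
    (hRel : Rel = ∑ i, s i ⊗ₜ[k] t i) (φ ψ : Dual k A) :
    rhat k Rel φ ψ = φ (∑ i, ψ (t i) • s i) := by
  simp [rhat_apply, hRel, mul_comm]

theorem IsHomBialgebra.comul_mul (h : IsHomBialgebra k μ Δ α) (x y : A) :
    Δ (μ x y) = map₂ μ μ (Δ x) (Δ y) := by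
  obtain ⟨m, x₁, x₂, hx⟩ := exists_eq_sum_tmul (Δ x)
  obtain ⟨n, y₁, y₂, hy⟩ := exists_eq_sum_tmul (Δ y)
  rw [h.2.2.2.2 x y m n x₁ x₂ y₁ y₂ hx hy, hx, hy, map₂_sum_tmul_sum_tmul]

theorem deltaStarBil_dualMap (hαΔ : map α α ∘ₗ Δ = Δ ∘ₗ α) (φ ψ : Dual k A) :
    α.dualMap (deltaStarBil k Δ φ ψ) = deltaStarBil k Δ (α.dualMap φ) (α.dualMap ψ) := by
  ext x
  simp only [deltaStarBil_apply, dualDistrib_dualMap_tmul_dualMap, LinearMap.dualMap_apply]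
  rw [← LinearMap.comp_apply (map α α), hαΔ, LinearMap.comp_apply]

theorem deltaStarBil_homAssoc
    (hcoassoc : map α Δ ∘ₗ Δ = (TensorProduct.assoc k A A A).toLinearMap ∘ₗ map Δ α ∘ₗ Δ)
    (φ ψ χ : Dual k A) :
    deltaStarBil k Δ (α.dualMap φ) (deltaStarBil k Δ ψ χ)
      = deltaStarBil k Δ (deltaStarBil k Δ φ ψ) (α.dualMap χ) := by
  ext x
  simp only [deltaStarBil_apply, dualDistrib_dualMap_tmul_dualMap, LinearMap.dualMap_apply]
  rw [← LinearMap.comp_apply (map α Δ), hcoassoc, ← dualDistrib_tmul_dualDistrib_comp_assoc]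
  rfl

variable [Module.Free k A] [Module.Finite k A]

@[simp]
theorem dualDistrib_mulStar_tmul (φ : Dual k A) (x y : A) :
    dualDistrib k A A (mulStar k μ φ) (x ⊗ₜ y) = φ (μ x y) := by
  have : dualDistrib k A A (mulStar k μ φ) = (lift μ).dualMap φ :=
    (dualDistribEquiv k A A).apply_symm_apply _
  rw [this]
  rfl

theorem sum_apply_mul_apply_of_mulStar_eq {φ : Dual k A} {n : ℕ}
    {φ₁ φ₂ : Fin n → Dual k A} (hφ : mulStar k μ φ = ∑ i, φ₁ i ⊗ₜ φ₂ i) (x y : A) :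
    ∑ i, φ₁ i x * φ₂ i y = φ (μ x y) := by
  rw [← dualDistrib_mulStar_tmul, hφ]
  simp

theorem dualDistrib_map₂_of_mulStar_eq {φ ψ : Dual k A} {m n : ℕ}
    {φ₁ φ₂ : Fin m → Dual k A} {ψ₁ ψ₂ : Fin n → Dual k A}
    (hφ : mulStar k μ φ = ∑ i, φ₁ i ⊗ₜ φ₂ i) (hψ : mulStar k μ ψ = ∑ j, ψ₁ j ⊗ₜ ψ₂ j)
    (a b : A ⊗[k] A) :
    dualDistrib k A A (φ ⊗ₜ ψ) (map₂ μ μ a b)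
      = ∑ i, ∑ j,
          dualDistrib k A A (φ₁ i ⊗ₜ ψ₁ j) a * dualDistrib k A A (φ₂ i ⊗ₜ ψ₂ j) b := by
  induction a using TensorProduct.induction_on with
  | zero => simp
  | add a a' ha ha' => simp only [map_add, LinearMap.add_apply, ha, ha', add_mul,
      Finset.sum_add_distrib]
  | tmul x x' =>
    induction b using TensorProduct.induction_on with
    | zero => simp
    | add b b' hb hb' => simp only [map_add, hb, hb', mul_add, Finset.sum_add_distrib]
    | tmul y y' =>
      rw [map₂_apply_tmul, map_tmul, dualDistrib_apply, ← sum_apply_mul_apply_of_mulStar_eq hφ,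
        ← sum_apply_mul_apply_of_mulStar_eq hψ, Finset.sum_mul_sum]
      simp only [dualDistrib_apply]
      exact Finset.sum_congr rfl fun i _ ↦ Finset.sum_congr rfl fun j _ ↦ by ring

theorem mulStar_dualMap (hαμ : ∀ x y, α (μ x y) = μ (α x) (α y)) (φ : Dual k A) :
    map α.dualMap α.dualMap (mulStar k μ φ) = mulStar k μ (α.dualMap φ) :=
  ext_dualDistrib_apply fun x y ↦ by
    rw [dualDistrib_map_dualMap]
    simp [hαμ]

theorem mulStar_homCoassoc (hassoc : ∀ x y z, μ (α x) (μ y z) = μ (μ x y) (α z)) :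
    map α.dualMap (mulStar k μ) ∘ₗ mulStar k μ
      = (TensorProduct.assoc k _ _ _).toLinearMap ∘ₗ map (mulStar k μ) α.dualMap
          ∘ₗ mulStar k μ := by
  ext φ : 1
  obtain ⟨n, φ₁, φ₂, hφ⟩ := exists_eq_sum_tmul (mulStar k μ φ)
  refine ext_dualDistrib_lTensor_apply fun x y z ↦ ?_
  simp only [LinearMap.comp_apply, LinearEquiv.coe_coe, dualDistrib_lTensor_assoc_apply, hφ,
    map_sum, map_tmul, LinearMap.lTensor_tmul, LinearMap.rTensor_tmul, LinearMap.coe_sum,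
    Finset.sum_apply, dualDistrib_apply, dualDistrib_mulStar_tmul, LinearMap.dualMap_apply]
  rw [sum_apply_mul_apply_of_mulStar_eq hφ, sum_apply_mul_apply_of_mulStar_eq hφ, hassoc]

theorem mulStar_deltaStarBil (hcomul : ∀ x y, Δ (μ x y) = map₂ μ μ (Δ x) (Δ y))
    {φ ψ : Dual k A} {m n : ℕ} {φ₁ φ₂ : Fin m → Dual k A} {ψ₁ ψ₂ : Fin n → Dual k A}
    (hφ : mulStar k μ φ = ∑ i, φ₁ i ⊗ₜ φ₂ i) (hψ : mulStar k μ ψ = ∑ j, ψ₁ j ⊗ₜ ψ₂ j) :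
    mulStar k μ (deltaStarBil k Δ φ ψ)
      = ∑ i, ∑ j, deltaStarBil k Δ (φ₁ i) (ψ₁ j) ⊗ₜ deltaStarBil k Δ (φ₂ i) (ψ₂ j) :=
  ext_dualDistrib_apply fun x y ↦ by
    rw [dualDistrib_mulStar_tmul, deltaStarBil_apply, LinearMap.dualMap_apply, hcomul,
      dualDistrib_map₂_of_mulStar_eq hφ hψ]
    simp [deltaStarBil_apply]

theorem IsHomBialgebra.dual (h : IsHomBialgebra k μ Δ α) :
    IsHomBialgebra k (deltaStarBil k Δ) (mulStar k μ) α.dualMap := by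
  have hcomul := h.comul_mul
  obtain ⟨hαμ, hassoc, hαΔ, hcoassoc, -⟩ := h
  exact ⟨deltaStarBil_dualMap hαΔ, deltaStarBil_homAssoc hcoassoc,
    LinearMap.ext (mulStar_dualMap hαμ), mulStar_homCoassoc hassoc,
    fun _ _ _ _ _ _ _ _ hφ hψ ↦ mulStar_deltaStarBil hcomul hφ hψ⟩

end DualHomBialgebra

section Braiding

variable {k A : Type*} [CommRing k] [AddCommGroup A] [Module k A]
  {μ : A →ₗ[k] A →ₗ[k] A} {Δ : A →ₗ[k] A ⊗[k] A} {α : A →ₗ[k] A} {Rel : A ⊗[k] A}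

theorem rhat_deltaStarBil_dualMap (φ ψ χ : Dual k A) :
    rhat k Rel (deltaStarBil k Δ φ ψ) (α.dualMap χ)
      = dualDistrib k (A ⊗[k] A) A (dualDistrib k A A (φ ⊗ₜ ψ) ⊗ₜ χ) (map Δ α Rel) := by
  rw [rhat_apply, deltaStarBil_apply, dualDistrib_dualMap_tmul_dualMap]
  rfl

theorem rhat_dualMap_deltaStarBil (φ ψ χ : Dual k A) :
    rhat k Rel (α.dualMap φ) (deltaStarBil k Δ ψ χ)
      = dualDistrib k A (A ⊗[k] A) (φ ⊗ₜ dualDistrib k A A (ψ ⊗ₜ χ)) (map α Δ Rel) := by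
  rw [rhat_apply, deltaStarBil_apply, dualDistrib_dualMap_tmul_dualMap]
  rfl

theorem dualDistrib_sum_tmul_tmul_mul {n : ℕ} (a b c d : Fin n → A) (φ ψ χ : Dual k A) :
    dualDistrib k (A ⊗[k] A) A (dualDistrib k A A (φ ⊗ₜ ψ) ⊗ₜ χ)
        (∑ i, ∑ j, (a i ⊗ₜ b j) ⊗ₜ μ (c i) (d j))
      = χ (μ (∑ i, φ (a i) • c i) (∑ j, ψ (b j) • d j)) := by
  simp only [map_sum, dualDistrib_apply, map_smul, LinearMap.coe_sum, LinearMap.coe_smul,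
    Finset.sum_apply, Pi.smul_apply, smul_eq_mul, Finset.mul_sum]
  rw [Finset.sum_comm]
  exact Finset.sum_congr rfl fun _ _ ↦ Finset.sum_congr rfl fun _ _ ↦ by ring

theorem dualDistrib_sum_mul_tmul_tmul {n : ℕ} (a b c d : Fin n → A) (φ ψ χ : Dual k A) :
    dualDistrib k A (A ⊗[k] A) (φ ⊗ₜ dualDistrib k A A (ψ ⊗ₜ χ))
        (∑ i, ∑ j, μ (a i) (b j) ⊗ₜ (c j ⊗ₜ d i))
      = φ (μ (∑ i, χ (d i) • a i) (∑ j, ψ (c j) • b j)) := by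
  simp only [map_sum, dualDistrib_apply, map_smul, LinearMap.coe_sum, LinearMap.coe_smul,
    Finset.sum_apply, Pi.smul_apply, smul_eq_mul, Finset.mul_sum]
  rw [Finset.sum_comm]
  exact Finset.sum_congr rfl fun _ _ ↦ Finset.sum_congr rfl fun _ _ ↦ by ring

theorem braided_commute_iff :
    (∀ (x : A) (m n : ℕ) (x1 x2 : Fin m → A) (s t : Fin n → A),
      Δ x = ∑ i, x1 i ⊗ₜ[k] x2 i → Rel = ∑ i, s i ⊗ₜ[k] t i →
      ∑ i, ∑ j, μ (x2 i) (s j) ⊗ₜ[k] μ (x1 i) (t j)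
        = ∑ i, ∑ j, μ (s j) (x1 i) ⊗ₜ[k] μ (t j) (x2 i)) ↔
    ∀ x, map₂ μ μ (TensorProduct.comm k A A (Δ x)) Rel = map₂ μ μ Rel (Δ x) := by
  have sweedler : ∀ (x : A) (m n : ℕ) (x₁ x₂ : Fin m → A) (s t : Fin n → A),
      Δ x = ∑ i, x₁ i ⊗ₜ[k] x₂ i → Rel = ∑ i, s i ⊗ₜ[k] t i →
      ∑ i, ∑ j, μ (x₂ i) (s j) ⊗ₜ[k] μ (x₁ i) (t j)
          = map₂ μ μ (TensorProduct.comm k A A (Δ x)) Rel ∧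
        ∑ i, ∑ j, μ (s j) (x₁ i) ⊗ₜ[k] μ (t j) (x₂ i) = map₂ μ μ Rel (Δ x) := by
    intro x m n x₁ x₂ s t hx hRel
    constructor
    · simp only [hx, hRel, map_sum (TensorProduct.comm k A A), comm_tmul,
        map₂_sum_tmul_sum_tmul]
    · rw [hx, hRel, map₂_sum_tmul_sum_tmul]
      exact Finset.sum_comm
  constructor
  · intro h x
    obtain ⟨m, x₁, x₂, hx⟩ := exists_eq_sum_tmul (Δ x)
    obtain ⟨n, s, t, hRel⟩ := exists_eq_sum_tmul Rel
    obtain ⟨hl, hr⟩ := sweedler x m n x₁ x₂ s t hx hRel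
    rw [← hl, ← hr, h x m n x₁ x₂ s t hx hRel]
  · intro h x m n x₁ x₂ s t hx hRel
    obtain ⟨hl, hr⟩ := sweedler x m n x₁ x₂ s t hx hRel
    rw [hl, hr, h x]

variable [Module.Free k A] [Module.Finite k A]

theorem sum_rhat_mul_rhat_eq_left {n m : ℕ} {s t : Fin n → A} {χ : Dual k A}
    {χ₁ χ₂ : Fin m → Dual k A} (hRel : Rel = ∑ i, s i ⊗ₜ[k] t i)
    (hχ : mulStar k μ χ = ∑ c, χ₁ c ⊗ₜ χ₂ c) (φ ψ : Dual k A) :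
    ∑ c, rhat k Rel φ (χ₁ c) * rhat k Rel ψ (χ₂ c)
      = χ (μ (∑ i, φ (s i) • t i) (∑ j, ψ (s j) • t j)) := by
  simp only [rhat_eq_apply_sum_smul_left hRel]
  exact sum_apply_mul_apply_of_mulStar_eq hχ _ _

theorem sum_rhat_mul_rhat_eq_right {n m : ℕ} {s t : Fin n → A} {φ : Dual k A}
    {φ₁ φ₂ : Fin m → Dual k A} (hRel : Rel = ∑ i, s i ⊗ₜ[k] t i)
    (hφ : mulStar k μ φ = ∑ c, φ₁ c ⊗ₜ φ₂ c) (ψ χ : Dual k A) :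
    ∑ c, rhat k Rel (φ₁ c) χ * rhat k Rel (φ₂ c) ψ
      = φ (μ (∑ i, χ (t i) • s i) (∑ j, ψ (t j) • s j)) := by
  simp only [rhat_eq_apply_sum_smul_right hRel]
  exact sum_apply_mul_apply_of_mulStar_eq hφ _ _

theorem braided_comul_left_iff :
    (∀ (n : ℕ) (s t : Fin n → A), Rel = ∑ i, s i ⊗ₜ[k] t i →
      TensorProduct.map Δ α Rel = ∑ i, ∑ j, (α (s i) ⊗ₜ[k] α (s j)) ⊗ₜ[k] μ (t i) (t j)) ↔
    (∀ (φ ψ χ : Dual k A) (n : ℕ) (χ₁ χ₂ : Fin n → Dual k A),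
      mulStar k μ χ = ∑ i, χ₁ i ⊗ₜ[k] χ₂ i →
      rhat k Rel (deltaStarBil k Δ φ ψ) (α.dualMap χ)
        = ∑ i, rhat k Rel (α.dualMap φ) (χ₁ i) * rhat k Rel (α.dualMap ψ) (χ₂ i)) := by
  constructor
  · intro hR φ ψ χ m χ₁ χ₂ hχ
    obtain ⟨n, s, t, hRel⟩ := exists_eq_sum_tmul Rel
    rw [rhat_deltaStarBil_dualMap, hR n s t hRel, dualDistrib_sum_tmul_tmul_mul,
      sum_rhat_mul_rhat_eq_left hRel hχ]
    rfl
  · intro hR n s t hRel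
    refine ext_dualDistrib_threefold fun φ ψ χ ↦ ?_
    obtain ⟨m, χ₁, χ₂, hχ⟩ := exists_eq_sum_tmul (mulStar k μ χ)
    rw [← rhat_deltaStarBil_dualMap, hR φ ψ χ m χ₁ χ₂ hχ, dualDistrib_sum_tmul_tmul_mul,
      sum_rhat_mul_rhat_eq_left hRel hχ]
    rfl

theorem braided_comul_right_iff :
    (∀ (n : ℕ) (s t : Fin n → A), Rel = ∑ i, s i ⊗ₜ[k] t i →
      TensorProduct.map α Δ Rel = ∑ i, ∑ j, μ (s i) (s j) ⊗ₜ[k] (α (t j) ⊗ₜ[k] α (t i))) ↔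
    (∀ (φ ψ χ : Dual k A) (n : ℕ) (φ₁ φ₂ : Fin n → Dual k A),
      mulStar k μ φ = ∑ i, φ₁ i ⊗ₜ[k] φ₂ i →
      rhat k Rel (α.dualMap φ) (deltaStarBil k Δ ψ χ)
        = ∑ i, rhat k Rel (φ₁ i) (α.dualMap χ) * rhat k Rel (φ₂ i) (α.dualMap ψ)) := by
  constructor
  · intro hR φ ψ χ m φ₁ φ₂ hφ
    obtain ⟨n, s, t, hRel⟩ := exists_eq_sum_tmul Rel
    rw [rhat_dualMap_deltaStarBil, hR n s t hRel, dualDistrib_sum_mul_tmul_tmul,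
      sum_rhat_mul_rhat_eq_right hRel hφ]
    rfl
  · intro hR n s t hRel
    refine ext_dualDistrib_threefold' fun φ ψ χ ↦ ?_
    obtain ⟨m, φ₁, φ₂, hφ⟩ := exists_eq_sum_tmul (mulStar k μ φ)
    rw [← rhat_dualMap_deltaStarBil, hR φ ψ χ m φ₁ φ₂ hφ, dualDistrib_sum_mul_tmul_tmul,
      sum_rhat_mul_rhat_eq_right hRel hφ]
    rfl

theorem sum_rhat_smul_deltaStarBil_apply {φ ψ : Dual k A} {m n : ℕ}
    {φ₁ φ₂ : Fin m → Dual k A} {ψ₁ ψ₂ : Fin n → Dual k A}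
    (hφ : mulStar k μ φ = ∑ i, φ₁ i ⊗ₜ φ₂ i) (hψ : mulStar k μ ψ = ∑ j, ψ₁ j ⊗ₜ ψ₂ j) (x : A) :
    (∑ i, ∑ j, rhat k Rel (φ₁ i) (ψ₁ j) • deltaStarBil k Δ (φ₂ i) (ψ₂ j)) x
      = dualDistrib k A A (φ ⊗ₜ ψ) (map₂ μ μ Rel (Δ x)) := by
  rw [dualDistrib_map₂_of_mulStar_eq hφ hψ]
  simp [rhat_apply, deltaStarBil_apply]

theorem sum_rhat_smul_deltaStarBil_swap_apply {φ ψ : Dual k A} {m n : ℕ}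
    {φ₁ φ₂ : Fin m → Dual k A} {ψ₁ ψ₂ : Fin n → Dual k A}
    (hφ : mulStar k μ φ = ∑ i, φ₁ i ⊗ₜ φ₂ i) (hψ : mulStar k μ ψ = ∑ j, ψ₁ j ⊗ₜ ψ₂ j) (x : A) :
    (∑ i, ∑ j, rhat k Rel (φ₂ i) (ψ₂ j) • deltaStarBil k Δ (ψ₁ j) (φ₁ i)) x
      = dualDistrib k A A (φ ⊗ₜ ψ) (map₂ μ μ (TensorProduct.comm k A A (Δ x)) Rel) := by
  rw [dualDistrib_map₂_of_mulStar_eq hφ hψ]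
  simp [rhat_apply, deltaStarBil_apply, dualDistrib_apply_comm, mul_comm]

theorem braided_commute_iff_dual :
    (∀ (x : A) (m n : ℕ) (x1 x2 : Fin m → A) (s t : Fin n → A),
      Δ x = ∑ i, x1 i ⊗ₜ[k] x2 i → Rel = ∑ i, s i ⊗ₜ[k] t i →
      ∑ i, ∑ j, μ (x2 i) (s j) ⊗ₜ[k] μ (x1 i) (t j)
        = ∑ i, ∑ j, μ (s j) (x1 i) ⊗ₜ[k] μ (t j) (x2 i)) ↔
    (∀ (φ ψ : Dual k A) (m n : ℕ) (φ₁ φ₂ : Fin m → Dual k A) (ψ₁ ψ₂ : Fin n → Dual k A),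
      mulStar k μ φ = ∑ i, φ₁ i ⊗ₜ[k] φ₂ i → mulStar k μ ψ = ∑ j, ψ₁ j ⊗ₜ[k] ψ₂ j →
      ∑ i, ∑ j, rhat k Rel (φ₂ i) (ψ₂ j) • deltaStarBil k Δ (ψ₁ j) (φ₁ i)
        = ∑ i, ∑ j, rhat k Rel (φ₁ i) (ψ₁ j) • deltaStarBil k Δ (φ₂ i) (ψ₂ j)) := by
  rw [braided_commute_iff]
  constructor
  · intro h φ ψ m n φ₁ φ₂ ψ₁ ψ₂ hφ hψ
    ext x
    rw [sum_rhat_smul_deltaStarBil_swap_apply hφ hψ, sum_rhat_smul_deltaStarBil_apply hφ hψ,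
      h x]
  · intro h x
    refine ext_dualDistrib fun φ ψ ↦ ?_
    obtain ⟨m, φ₁, φ₂, hφ⟩ := exists_eq_sum_tmul (mulStar k μ φ)
    obtain ⟨n, ψ₁, ψ₂, hψ⟩ := exists_eq_sum_tmul (mulStar k μ ψ)
    rw [← sum_rhat_smul_deltaStarBil_swap_apply hφ hψ,
      ← sum_rhat_smul_deltaStarBil_apply hφ hψ, h φ ψ m n φ₁ φ₂ ψ₁ ψ₂ hφ hψ]

end Braiding

/-- Theorem 6.3: duality between finite dimensional braided and
cobraided Hom-bialgebras.  `(A, μ, Δ, α, R)` is a braided Hom-bialgebra iff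
`(A*, Δ*, μ*, α*, R̂)` is a cobraided Hom-bialgebra. -/
theorem braided_iff_dual_cobraided
    (k : Type*) {A : Type*} [Field k] [AddCommGroup A] [Module k A] [FiniteDimensional k A]
    (μ : A →ₗ[k] A →ₗ[k] A) (Δ : A →ₗ[k] A ⊗[k] A) (α : A →ₗ[k] A)
    (Rel : A ⊗[k] A)
    (h : IsHomBialgebra k μ Δ α) :
    IsBraidedHomBialgebra k μ Δ α Rel
      ↔ IsCobraidedHomBialgebra k (deltaStarBil k Δ) (mulStar k μ) α.dualMap
          (rhat k Rel) := by
  constructor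
  · rintro ⟨-, hleft, hright, hcomm⟩
    exact ⟨h.dual, braided_comul_left_iff.mp hleft, braided_comul_right_iff.mp hright,
      braided_commute_iff_dual.mp hcomm⟩
  · rintro ⟨-, hleft, hright, hcomm⟩
    exact ⟨h, braided_comul_left_iff.mpr hleft, braided_comul_right_iff.mpr hright,
      braided_commute_iff_dual.mpr hcomm⟩
end

section
/- Let (A, μ, Δ, α, R) be a cobraided Hom-bialgebra over a commutative ring k whose Hom-cobraiding form R is α-invariant. Let (U, α_U), (V, α_V), (W, α_W) be A-comodules, and for any two A-comodules X, Y define B_{X,Y} : X ⊗ Y → Y ⊗ X by B_{X,Y}(x ⊗ y) = Σ R(y_A ⊗ x_A) y_Y ⊗ x_X. Then the mixed Hom-Yang-Baxter identity holds on U ⊗ V ⊗ W: (α_W ⊗ B_{U,V}) ∘ (B_{U,W} ⊗ α_V) ∘ (α_U ⊗ B_{V,W}) = (B_{V,W} ⊗ α_U) ∘ (α_V ⊗ B_{U,W}) ∘ (B_{U,V} ⊗ α_W) as maps U ⊗ V ⊗ W → W ⊗ V ⊗ U. -/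
open TensorProduct

/-! Evaluated on `u ⊗ v ⊗ w`, both sides see each of `u, v, w` only through its iterated
coaction `(α ⊗ ρ) ∘ ρ`, whose two `A`-legs are paired by `R` with legs of the other two
elements (after α-invariance of `R` has absorbed the stray twists). Hom-coassociativity of the
comodules replaces `(α ⊗ ρ) ∘ ρ` by `(Δ ⊗ α) ∘ ρ`, which brings both sides to the form
`Σ K(u₋₁, v₋₁, w₋₁) • α²w₀ ⊗ α²v₀ ⊗ α²u₀`. The two coefficients `K` agree by the Yang–Baxter
identity `Σ R(c₁, b₁) R(c₂, a₁) R(b₂, a₂) = Σ R(b₁, a₁) R(c₁, a₂) R(c₂, b₂)`: axiom (i) contracts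
the `a`-legs into `R(xy, α²a)`, and axiom (iii) trades `R(c₁, b₁) R(c₂b₂, α²a)` for
`R(c₂, b₂) R(b₁c₁, α²a)`. -/

namespace TensorProduct

variable {R M N P Q : Type*} [CommSemiring R] [AddCommMonoid M] [AddCommMonoid N]
  [AddCommMonoid P] [AddCommMonoid Q] [Module R M] [Module R N] [Module R P] [Module R Q]

noncomputable def finsetRepr (t : M ⊗[R] N) : Finset (M × N) :=
  (exists_finset t).choose

theorem sum_finsetRepr (t : M ⊗[R] N) : ∑ p ∈ finsetRepr t, p.1 ⊗ₜ[R] p.2 = t :=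
  (exists_finset t).choose_spec.symm

theorem map_eq_sum_finsetRepr (f : M →ₗ[R] P) (g : N →ₗ[R] Q) (t : M ⊗[R] N) :
    map f g t = ∑ p ∈ finsetRepr t, f p.1 ⊗ₜ[R] g p.2 := by
  conv_lhs => rw [← sum_finsetRepr t]
  simp only [map_sum, map_tmul]

end TensorProduct

/-- `∑ p ∈ 𝒮 (ρ x), p.1 ⊗ₜ p.2` is the Sweedler sum `Σ x₋₁ ⊗ x₀`. -/
local notation "𝒮" => TensorProduct.finsetRepr

namespace Finset

variable {ι κ α β γ M : Type*} [AddCommMonoid M]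

theorem sum_eq_sum_fin (s : Finset ι) (f : ι → M) :
    ∑ i ∈ s, f i = ∑ n : Fin s.card, f (s.equivFin.symm n) := by
  rw [← sum_coe_sort s, ← Equiv.sum_comp s.equivFin.symm]

theorem sum_block_comm (s : Finset ι) (t : ι → Finset α) (s' : Finset κ) (t' : κ → Finset β)
    (f : ι → α → κ → β → M) :
    ∑ x ∈ s, ∑ a ∈ t x, ∑ y ∈ s', ∑ b ∈ t' y, f x a y b
      = ∑ y ∈ s', ∑ b ∈ t' y, ∑ x ∈ s, ∑ a ∈ t x, f x a y b := by
  calc _ = ∑ x ∈ s, ∑ y ∈ s', ∑ a ∈ t x, ∑ b ∈ t' y, f x a y b :=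
        sum_congr rfl fun _ _ => sum_comm
    _ = ∑ y ∈ s', ∑ x ∈ s, ∑ b ∈ t' y, ∑ a ∈ t x, f x a y b := by
        rw [sum_comm]; exact sum_congr rfl fun _ _ => sum_congr rfl fun _ _ => sum_comm
    _ = _ := sum_congr rfl fun _ _ => sum_comm

theorem sum_block_regroup {ν γ : Type*} (s : Finset ι) (t : ι → Finset α) (s' : Finset κ)
    (t' : κ → Finset β) (s'' : Finset ν) (t'' : ν → Finset γ) (f : ι → α → κ → β → ν → γ → M) :
    ∑ x ∈ s, ∑ a ∈ t x, ∑ y ∈ s', ∑ b ∈ t' y, ∑ z ∈ s'', ∑ c ∈ t'' z, f x a y b z c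
      = ∑ x ∈ s, ∑ y ∈ s', ∑ z ∈ s'', ∑ c ∈ t'' z, ∑ b ∈ t' y, ∑ a ∈ t x, f x a y b z c := by
  refine sum_congr rfl fun x _ => sum_comm.trans (sum_congr rfl fun y _ => ?_)
  calc _ = ∑ z ∈ s'', ∑ a ∈ t x, ∑ b ∈ t' y, ∑ c ∈ t'' z, f x a y b z c :=
        (sum_congr rfl fun _ _ => sum_comm).trans sum_comm
    _ = ∑ z ∈ s'', ∑ c ∈ t'' z, ∑ a ∈ t x, ∑ b ∈ t' y, f x a y b z c :=
        sum_congr rfl fun _ _ => (sum_congr rfl fun _ _ => sum_comm).trans sum_comm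
    _ = _ := sum_congr rfl fun _ _ => sum_congr rfl fun _ _ => sum_comm

end Finset

section Comodule

variable {k A M N : Type*} [CommRing k] [AddCommGroup A] [Module k A] [AddCommGroup M]
  [Module k M] [AddCommGroup N] [Module k N] {Δ : A →ₗ[k] A ⊗[k] A} {α : A →ₗ[k] A}
  {αM : M →ₗ[k] M} {ρ : M →ₗ[k] A ⊗[k] M}

theorem IsComodule.coaction_twist (hM : IsComodule k Δ α αM ρ) (x : M) :
    ρ (αM x) = ∑ p ∈ 𝒮 (ρ x), α p.1 ⊗ₜ[k] αM p.2 := by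
  rw [← LinearMap.comp_apply, ← hM.2, LinearMap.comp_apply, map_eq_sum_finsetRepr]

theorem IsComodule.sum_coassoc (hM : IsComodule k Δ α αM ρ) (x : M) (f g : A →ₗ[k] k)
    (h : M →ₗ[k] N) :
    ∑ p ∈ 𝒮 (ρ x), ∑ q ∈ 𝒮 (ρ p.2), (f (α p.1) * g q.1) • h q.2
      = ∑ p ∈ 𝒮 (ρ x), ∑ d ∈ 𝒮 (Δ p.1), (f d.1 * g d.2) • h (αM p.2) := by
  set L := lift (f.smulRight (lift (g.smulRight h)))
  have hL (a b : A) (m : M) : L (a ⊗ₜ (b ⊗ₜ m)) = (f a * g b) • h m := by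
    simp [L, smul_smul]
  have hρ (p : A × M) : L (α p.1 ⊗ₜ ρ p.2) = ∑ q ∈ 𝒮 (ρ p.2), (f (α p.1) * g q.1) • h q.2 := by
    conv_lhs => rw [← sum_finsetRepr (ρ p.2)]
    simp only [tmul_sum, map_sum, hL]
  have hΔ (p : A × M) :
      L (TensorProduct.assoc k A A M (Δ p.1 ⊗ₜ αM p.2))
        = ∑ d ∈ 𝒮 (Δ p.1), (f d.1 * g d.2) • h (αM p.2) := by
    conv_lhs => rw [← sum_finsetRepr (Δ p.1)]
    simp only [sum_tmul, map_sum, assoc_tmul, hL]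
  calc _ = ∑ p ∈ 𝒮 (ρ x), L (α p.1 ⊗ₜ ρ p.2) := by simp only [hρ]
    _ = L (map α ρ (ρ x)) := by rw [map_eq_sum_finsetRepr, map_sum]
    _ = L (TensorProduct.assoc k A A M (map Δ αM (ρ x))) := by
        rw [← LinearMap.comp_apply (map α ρ), ← hM.1]; rfl
    _ = ∑ p ∈ 𝒮 (ρ x), L (TensorProduct.assoc k A A M (Δ p.1 ⊗ₜ αM p.2)) := by
        rw [map_eq_sum_finsetRepr, map_sum, map_sum]
    _ = _ := by simp only [hΔ]

end Comodule

section Cobraided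

variable {k A : Type*} [CommRing k] [AddCommGroup A] [Module k A] {μ : A →ₗ[k] A →ₗ[k] A}
  {Δ : A →ₗ[k] A ⊗[k] A} {α : A →ₗ[k] A} {R : A →ₗ[k] A →ₗ[k] k}

theorem IsCobraidedHomBialgebra.R_mul_eq_sum (h : IsCobraidedHomBialgebra k μ Δ α R) {ι : Type*}
    {s : Finset ι} {z : A} {z₁ z₂ : ι → A} (hz : Δ z = ∑ i ∈ s, z₁ i ⊗ₜ[k] z₂ i) (x y : A) :
    R (μ x y) (α z) = ∑ i ∈ s, R (α x) (z₁ i) * R (α y) (z₂ i) := by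
  rw [Finset.sum_eq_sum_fin] at hz ⊢
  exact h.2.1 x y z _ _ _ hz

theorem IsCobraidedHomBialgebra.sum_R_smul_mul_comm (h : IsCobraidedHomBialgebra k μ Δ α R)
    (x y : A) :
    ∑ p ∈ 𝒮 (Δ x), ∑ q ∈ 𝒮 (Δ y), R p.2 q.2 • μ q.1 p.1
      = ∑ p ∈ 𝒮 (Δ x), ∑ q ∈ 𝒮 (Δ y), R p.1 q.1 • μ p.2 q.2 := by
  have hx := (sum_finsetRepr (Δ x)).symm
  have hy := (sum_finsetRepr (Δ y)).symm
  rw [Finset.sum_eq_sum_fin] at hx hy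
  simp only [Finset.sum_eq_sum_fin (𝒮 (Δ x)), Finset.sum_eq_sum_fin (𝒮 (Δ y))]
  exact h.2.2.2 x y _ _ _ _ _ _ hx hy

theorem IsCobraidedHomBialgebra.sum_R_yangBaxter (h : IsCobraidedHomBialgebra k μ Δ α R)
    (hinv : ∀ x y : A, R (α x) (α y) = R x y) (a b c : A) :
    ∑ c' ∈ 𝒮 (Δ c), ∑ b' ∈ 𝒮 (Δ b), ∑ a' ∈ 𝒮 (Δ a), R c'.1 b'.1 * R c'.2 a'.1 * R b'.2 a'.2
      = ∑ c' ∈ 𝒮 (Δ c), ∑ b' ∈ 𝒮 (Δ b), ∑ a' ∈ 𝒮 (Δ a),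
          R b'.1 a'.1 * R c'.1 a'.2 * R c'.2 b'.2 := by
  have hΔα : Δ (α a) = ∑ a' ∈ 𝒮 (Δ a), α a'.1 ⊗ₜ[k] α a'.2 := by
    rw [← LinearMap.comp_apply, ← h.1.2.2.1, LinearMap.comp_apply, map_eq_sum_finsetRepr]
  have hR (x y : A) : ∑ a' ∈ 𝒮 (Δ a), R x a'.1 * R y a'.2 = R (μ x y) (α (α a)) := by
    simp only [h.R_mul_eq_sum hΔα, hinv]
  have hiii := congr(R.flip (α (α a)) $(h.sum_R_smul_mul_comm c b))
  simp only [map_sum, map_smul, LinearMap.flip_apply, smul_eq_mul] at hiii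
  calc _ = ∑ c' ∈ 𝒮 (Δ c), ∑ b' ∈ 𝒮 (Δ b), R c'.1 b'.1 * R (μ c'.2 b'.2) (α (α a)) := by
        simp only [mul_assoc, ← Finset.mul_sum, hR]
    _ = ∑ c' ∈ 𝒮 (Δ c), ∑ b' ∈ 𝒮 (Δ b), R c'.2 b'.2 * R (μ b'.1 c'.1) (α (α a)) := hiii.symm
    _ = _ := by
        simp only [← hR, Finset.mul_sum]
        refine Finset.sum_congr rfl fun _ _ => Finset.sum_congr rfl fun _ _ =>
          Finset.sum_congr rfl fun _ _ => by ring

end Cobraided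

section Braiding

variable {k A U V W : Type*} [CommRing k] [AddCommGroup A] [Module k A] [AddCommGroup U]
  [Module k U] [AddCommGroup V] [Module k V] [AddCommGroup W] [Module k W]
  {R : A →ₗ[k] A →ₗ[k] k}

theorem Bmap_tmul (ρV : V →ₗ[k] A ⊗[k] V) (ρW : W →ₗ[k] A ⊗[k] W) {ι κ : Type*} {s : Finset ι}
    {t : Finset κ} {v : V} {w : W} {a : ι → A} {v₀ : ι → V} {b : κ → A} {w₀ : κ → W}
    (hv : ρV v = ∑ i ∈ s, a i ⊗ₜ[k] v₀ i) (hw : ρW w = ∑ j ∈ t, b j ⊗ₜ[k] w₀ j) :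
    Bmap k R ρV ρW (v ⊗ₜ w) = ∑ i ∈ s, ∑ j ∈ t, R (b j) (a i) • (w₀ j ⊗ₜ[k] v₀ i) := by
  simp only [Bmap, LinearMap.comp_apply, LinearEquiv.coe_coe, comm_tmul, map_tmul, hv, hw,
    sum_tmul, tmul_sum, map_sum, tensorTensorTensorComm_tmul, lift.tmul, LinearMap.id_coe, id_eq,
    lid_tmul]

variable {Δ : A →ₗ[k] A ⊗[k] A} {α : A →ₗ[k] A}
  {αU : U →ₗ[k] U} {ρU : U →ₗ[k] A ⊗[k] U} {αV : V →ₗ[k] V} {ρV : V →ₗ[k] A ⊗[k] V}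
  {αW : W →ₗ[k] W} {ρW : W →ₗ[k] A ⊗[k] W}

theorem mixedHYBE_left_tmul_eq_sum_coaction (hinv : ∀ x y : A, R (α x) (α y) = R x y)
    (hU : IsComodule k Δ α αU ρU) (hV : IsComodule k Δ α αV ρV) (u : U) (v : V) (w : W) :
    ((TensorProduct.assoc k W V U).symm.toLinearMap
        ∘ₗ TensorProduct.map αW (Bmap k R ρU ρV)
        ∘ₗ (TensorProduct.assoc k W U V).toLinearMap
        ∘ₗ TensorProduct.map (Bmap k R ρU ρW) αV
        ∘ₗ (TensorProduct.assoc k U W V).symm.toLinearMap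
        ∘ₗ TensorProduct.map αU (Bmap k R ρV ρW)
        ∘ₗ (TensorProduct.assoc k U V W).toLinearMap) ((u ⊗ₜ v) ⊗ₜ w)
      = ∑ w₁ ∈ 𝒮 (ρW w), ∑ w₂ ∈ 𝒮 (ρW w₁.2), ∑ v₁ ∈ 𝒮 (ρV v), ∑ v₂ ∈ 𝒮 (ρV v₁.2),
          ∑ u₁ ∈ 𝒮 (ρU u), ∑ u₂ ∈ 𝒮 (ρU u₁.2), (R w₁.1 v₁.1 * R w₂.1 (α u₁.1) * R v₂.1 u₂.1) •
            ((αW w₂.2 ⊗ₜ[k] αV v₂.2) ⊗ₜ[k] αU u₂.2) := by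
  have hB₁ := (Bmap_tmul (R := R) ρV ρW (sum_finsetRepr (ρV v)).symm
    (sum_finsetRepr (ρW w)).symm).trans Finset.sum_comm
  have hB₂ := fun w' => (Bmap_tmul (R := R) ρU ρW (hU.coaction_twist u)
    (sum_finsetRepr (ρW w')).symm).trans Finset.sum_comm
  have hB₃ := fun u' v' => (Bmap_tmul (R := R) ρU ρV (hU.coaction_twist u')
    (hV.coaction_twist v')).trans Finset.sum_comm
  simp only [LinearMap.comp_apply, LinearEquiv.coe_coe, assoc_tmul, assoc_symm_tmul, map_tmul,
    hB₁, hB₂, hB₃, map_sum, map_smul, tmul_sum, sum_tmul, tmul_smul, ← smul_tmul', smul_smul,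
    Finset.smul_sum, hinv]
  refine Finset.sum_congr rfl fun w₁ _ => ?_
  rw [Finset.sum_comm]
  exact Finset.sum_congr rfl fun _ _ => Finset.sum_congr rfl fun _ _ => Finset.sum_comm

theorem mixedHYBE_left_tmul_eq_sum_comul (hinv : ∀ x y : A, R (α x) (α y) = R x y)
    (hU : IsComodule k Δ α αU ρU) (hV : IsComodule k Δ α αV ρV) (hW : IsComodule k Δ α αW ρW)
    (u : U) (v : V) (w : W) :
    ((TensorProduct.assoc k W V U).symm.toLinearMap
        ∘ₗ TensorProduct.map αW (Bmap k R ρU ρV)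
        ∘ₗ (TensorProduct.assoc k W U V).toLinearMap
        ∘ₗ TensorProduct.map (Bmap k R ρU ρW) αV
        ∘ₗ (TensorProduct.assoc k U W V).symm.toLinearMap
        ∘ₗ TensorProduct.map αU (Bmap k R ρV ρW)
        ∘ₗ (TensorProduct.assoc k U V W).toLinearMap) ((u ⊗ₜ v) ⊗ₜ w)
      = ∑ u₁ ∈ 𝒮 (ρU u), ∑ v₁ ∈ 𝒮 (ρV v), ∑ w₁ ∈ 𝒮 (ρW w),
          (∑ c ∈ 𝒮 (Δ w₁.1), ∑ b ∈ 𝒮 (Δ v₁.1), ∑ a ∈ 𝒮 (Δ u₁.1),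
            R c.1 b.1 * R c.2 a.1 * R b.2 a.2) •
          ((αW (αW w₁.2) ⊗ₜ[k] αV (αV v₁.2)) ⊗ₜ[k] αU (αU u₁.2)) := by
  rw [mixedHYBE_left_tmul_eq_sum_coaction hinv hU hV]
  calc _ = ∑ w₁ ∈ 𝒮 (ρW w), ∑ w₂ ∈ 𝒮 (ρW w₁.2), ∑ v₁ ∈ 𝒮 (ρV v), ∑ v₂ ∈ 𝒮 (ρV v₁.2),
          ∑ u₁ ∈ 𝒮 (ρU u), ∑ a ∈ 𝒮 (Δ u₁.1), (R w₁.1 v₁.1 * R w₂.1 a.1 * R v₂.1 a.2) •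
            ((αW w₂.2 ⊗ₜ[k] αV v₂.2) ⊗ₜ[k] αU (αU u₁.2)) := by
        refine Finset.sum_congr rfl fun w₁ _ => Finset.sum_congr rfl fun w₂ _ =>
          Finset.sum_congr rfl fun v₁ _ => Finset.sum_congr rfl fun v₂ _ => ?_
        simpa only [LinearMap.smul_apply, LinearMap.comp_apply, mk_apply, smul_smul, mul_comm,
          mul_left_comm] using hU.sum_coassoc u (R w₂.1) (R v₂.1)
            (R w₁.1 v₁.1 • (TensorProduct.mk k (W ⊗[k] V) U (αW w₂.2 ⊗ₜ αV v₂.2) ∘ₗ αU))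
    _ = ∑ u₁ ∈ 𝒮 (ρU u), ∑ a ∈ 𝒮 (Δ u₁.1), ∑ w₁ ∈ 𝒮 (ρW w), ∑ w₂ ∈ 𝒮 (ρW w₁.2),
          ∑ v₁ ∈ 𝒮 (ρV v), ∑ b ∈ 𝒮 (Δ v₁.1), (R (α w₁.1) b.1 * R w₂.1 a.1 * R b.2 a.2) •
            ((αW w₂.2 ⊗ₜ[k] αV (αV v₁.2)) ⊗ₜ[k] αU (αU u₁.2)) := by
        rw [Finset.sum_congr rfl fun _ _ => Finset.sum_congr rfl fun _ _ =>
          Finset.sum_block_comm _ _ _ _ _, Finset.sum_block_comm]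
        refine Finset.sum_congr rfl fun u₁ _ => Finset.sum_congr rfl fun a _ =>
          Finset.sum_congr rfl fun w₁ _ => Finset.sum_congr rfl fun w₂ _ => ?_
        simpa only [LinearMap.smul_apply, LinearMap.comp_apply, mk_apply, LinearMap.flip_apply,
          smul_smul, mul_comm, mul_left_comm, hinv] using hV.sum_coassoc v (R (α w₁.1)) (R.flip a.2)
            (R w₂.1 a.1 • ((TensorProduct.mk k (W ⊗[k] V) U).flip (αU (αU u₁.2)) ∘ₗ
              TensorProduct.mk k W V (αW w₂.2) ∘ₗ αV))
    _ = ∑ u₁ ∈ 𝒮 (ρU u), ∑ a ∈ 𝒮 (Δ u₁.1), ∑ v₁ ∈ 𝒮 (ρV v), ∑ b ∈ 𝒮 (Δ v₁.1),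
          ∑ w₁ ∈ 𝒮 (ρW w), ∑ c ∈ 𝒮 (Δ w₁.1), (R c.1 b.1 * R c.2 a.1 * R b.2 a.2) •
            ((αW (αW w₁.2) ⊗ₜ[k] αV (αV v₁.2)) ⊗ₜ[k] αU (αU u₁.2)) := by
        rw [Finset.sum_congr rfl fun _ _ => Finset.sum_congr rfl fun _ _ =>
          Finset.sum_block_comm _ _ _ _ _]
        refine Finset.sum_congr rfl fun u₁ _ => Finset.sum_congr rfl fun a _ =>
          Finset.sum_congr rfl fun v₁ _ => Finset.sum_congr rfl fun b _ => ?_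
        simpa only [LinearMap.smul_apply, LinearMap.comp_apply, mk_apply, LinearMap.flip_apply,
          smul_smul, mul_comm, mul_left_comm] using hW.sum_coassoc w (R.flip b.1) (R.flip a.1)
            (R b.2 a.2 • ((TensorProduct.mk k (W ⊗[k] V) U).flip (αU (αU u₁.2)) ∘ₗ
              (TensorProduct.mk k W V).flip (αV (αV v₁.2)) ∘ₗ αW))
    _ = _ := by simp only [Finset.sum_smul]; exact Finset.sum_block_regroup _ _ _ _ _ _ _

theorem mixedHYBE_right_tmul_eq_sum_coaction (hinv : ∀ x y : A, R (α x) (α y) = R x y)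
    (hV : IsComodule k Δ α αV ρV) (hW : IsComodule k Δ α αW ρW) (u : U) (v : V) (w : W) :
    (TensorProduct.map (Bmap k R ρV ρW) αU
        ∘ₗ (TensorProduct.assoc k V W U).symm.toLinearMap
        ∘ₗ TensorProduct.map αV (Bmap k R ρU ρW)
        ∘ₗ (TensorProduct.assoc k V U W).toLinearMap
        ∘ₗ TensorProduct.map (Bmap k R ρU ρV) αW) ((u ⊗ₜ v) ⊗ₜ w)
      = ∑ u₁ ∈ 𝒮 (ρU u), ∑ u₂ ∈ 𝒮 (ρU u₁.2), ∑ v₁ ∈ 𝒮 (ρV v), ∑ v₂ ∈ 𝒮 (ρV v₁.2),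
          ∑ w₁ ∈ 𝒮 (ρW w), ∑ w₂ ∈ 𝒮 (ρW w₁.2), (R v₁.1 u₁.1 * R (α w₁.1) u₂.1 * R w₂.1 v₂.1) •
            ((αW w₂.2 ⊗ₜ[k] αV v₂.2) ⊗ₜ[k] αU u₂.2) := by
  have hB₁ := Bmap_tmul (R := R) ρU ρV (sum_finsetRepr (ρU u)).symm (sum_finsetRepr (ρV v)).symm
  have hB₂ := fun u' => Bmap_tmul (R := R) ρU ρW (sum_finsetRepr (ρU u')).symm
    (hW.coaction_twist w)
  have hB₃ := fun v' w' => Bmap_tmul (R := R) ρV ρW (hV.coaction_twist v') (hW.coaction_twist w')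
  simp only [LinearMap.comp_apply, LinearEquiv.coe_coe, assoc_tmul, assoc_symm_tmul, map_tmul,
    hB₁, hB₂, hB₃, map_sum, map_smul, tmul_sum, sum_tmul, tmul_smul, ← smul_tmul', smul_smul,
    Finset.smul_sum, hinv]
  refine Finset.sum_congr rfl fun u₁ _ => ?_
  rw [Finset.sum_comm]
  exact Finset.sum_congr rfl fun _ _ => Finset.sum_congr rfl fun _ _ => Finset.sum_comm

theorem mixedHYBE_right_tmul_eq_sum_comul (hinv : ∀ x y : A, R (α x) (α y) = R x y)
    (hU : IsComodule k Δ α αU ρU) (hV : IsComodule k Δ α αV ρV) (hW : IsComodule k Δ α αW ρW)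
    (u : U) (v : V) (w : W) :
    (TensorProduct.map (Bmap k R ρV ρW) αU
        ∘ₗ (TensorProduct.assoc k V W U).symm.toLinearMap
        ∘ₗ TensorProduct.map αV (Bmap k R ρU ρW)
        ∘ₗ (TensorProduct.assoc k V U W).toLinearMap
        ∘ₗ TensorProduct.map (Bmap k R ρU ρV) αW) ((u ⊗ₜ v) ⊗ₜ w)
      = ∑ u₁ ∈ 𝒮 (ρU u), ∑ v₁ ∈ 𝒮 (ρV v), ∑ w₁ ∈ 𝒮 (ρW w),
          (∑ c ∈ 𝒮 (Δ w₁.1), ∑ b ∈ 𝒮 (Δ v₁.1), ∑ a ∈ 𝒮 (Δ u₁.1),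
            R b.1 a.1 * R c.1 a.2 * R c.2 b.2) •
          ((αW (αW w₁.2) ⊗ₜ[k] αV (αV v₁.2)) ⊗ₜ[k] αU (αU u₁.2)) := by
  rw [mixedHYBE_right_tmul_eq_sum_coaction hinv hV hW]
  calc _ = ∑ u₁ ∈ 𝒮 (ρU u), ∑ u₂ ∈ 𝒮 (ρU u₁.2), ∑ v₁ ∈ 𝒮 (ρV v), ∑ v₂ ∈ 𝒮 (ρV v₁.2),
          ∑ w₁ ∈ 𝒮 (ρW w), ∑ c ∈ 𝒮 (Δ w₁.1), (R v₁.1 u₁.1 * R c.1 u₂.1 * R c.2 v₂.1) •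
            ((αW (αW w₁.2) ⊗ₜ[k] αV v₂.2) ⊗ₜ[k] αU u₂.2) := by
        refine Finset.sum_congr rfl fun u₁ _ => Finset.sum_congr rfl fun u₂ _ =>
          Finset.sum_congr rfl fun v₁ _ => Finset.sum_congr rfl fun v₂ _ => ?_
        simpa only [LinearMap.smul_apply, LinearMap.comp_apply, mk_apply, LinearMap.flip_apply,
          smul_smul, mul_comm, mul_left_comm] using hW.sum_coassoc w (R.flip u₂.1) (R.flip v₂.1)
            (R v₁.1 u₁.1 • ((TensorProduct.mk k (W ⊗[k] V) U).flip (αU u₂.2) ∘ₗ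
              (TensorProduct.mk k W V).flip (αV v₂.2) ∘ₗ αW))
    _ = ∑ u₁ ∈ 𝒮 (ρU u), ∑ u₂ ∈ 𝒮 (ρU u₁.2), ∑ w₁ ∈ 𝒮 (ρW w), ∑ c ∈ 𝒮 (Δ w₁.1),
          ∑ v₁ ∈ 𝒮 (ρV v), ∑ b ∈ 𝒮 (Δ v₁.1), (R b.1 (α u₁.1) * R c.1 u₂.1 * R c.2 b.2) •
            ((αW (αW w₁.2) ⊗ₜ[k] αV (αV v₁.2)) ⊗ₜ[k] αU u₂.2) := by
        rw [Finset.sum_congr rfl fun _ _ => Finset.sum_congr rfl fun _ _ =>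
          Finset.sum_block_comm _ _ _ _ _]
        refine Finset.sum_congr rfl fun u₁ _ => Finset.sum_congr rfl fun u₂ _ =>
          Finset.sum_congr rfl fun w₁ _ => Finset.sum_congr rfl fun c _ => ?_
        simpa only [LinearMap.smul_apply, LinearMap.comp_apply, mk_apply, LinearMap.flip_apply,
          smul_smul, mul_comm, mul_left_comm, hinv] using hV.sum_coassoc v (R.flip (α u₁.1))
            (R c.2) (R c.1 u₂.1 • ((TensorProduct.mk k (W ⊗[k] V) U).flip (αU u₂.2) ∘ₗ
              TensorProduct.mk k W V (αW (αW w₁.2)) ∘ₗ αV))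
    _ = ∑ w₁ ∈ 𝒮 (ρW w), ∑ c ∈ 𝒮 (Δ w₁.1), ∑ v₁ ∈ 𝒮 (ρV v), ∑ b ∈ 𝒮 (Δ v₁.1),
          ∑ u₁ ∈ 𝒮 (ρU u), ∑ a ∈ 𝒮 (Δ u₁.1), (R b.1 a.1 * R c.1 a.2 * R c.2 b.2) •
            ((αW (αW w₁.2) ⊗ₜ[k] αV (αV v₁.2)) ⊗ₜ[k] αU (αU u₁.2)) := by
        rw [Finset.sum_block_comm, Finset.sum_congr rfl fun _ _ => Finset.sum_congr rfl
          fun _ _ => Finset.sum_block_comm _ _ _ _ _]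
        refine Finset.sum_congr rfl fun w₁ _ => Finset.sum_congr rfl fun c _ =>
          Finset.sum_congr rfl fun v₁ _ => Finset.sum_congr rfl fun b _ => ?_
        simpa only [LinearMap.smul_apply, LinearMap.comp_apply, mk_apply, smul_smul, mul_comm,
          mul_left_comm] using hU.sum_coassoc u (R b.1) (R c.1) (R c.2 b.2 •
            (TensorProduct.mk k (W ⊗[k] V) U (αW (αW w₁.2) ⊗ₜ αV (αV v₁.2)) ∘ₗ αU))
    _ = _ := by
        rw [Finset.sum_congr rfl fun _ _ => Finset.sum_congr rfl fun _ _ =>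
          Finset.sum_block_comm _ _ _ _ _, Finset.sum_block_comm,
          Finset.sum_congr rfl fun _ _ => Finset.sum_congr rfl fun _ _ =>
          Finset.sum_block_comm _ _ _ _ _]
        simp only [Finset.sum_smul]
        exact Finset.sum_block_regroup _ _ _ _ _ _ _

end Braiding

/-- Theorem 7.4(2): the mixed Hom-Yang-Baxter identity on
`U ⊗ V ⊗ W` for comodules over a cobraided Hom-bialgebra with `α`-invariant `R`. -/
theorem mixed_HYBE
    (k : Type*) {A U V W : Type*} [CommRing k] [AddCommGroup A] [Module k A]
    [AddCommGroup U] [Module k U] [AddCommGroup V] [Module k V]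
    [AddCommGroup W] [Module k W]
    (μ : A →ₗ[k] A →ₗ[k] A) (Δ : A →ₗ[k] A ⊗[k] A) (α : A →ₗ[k] A)
    (R : A →ₗ[k] A →ₗ[k] k)
    (h : IsCobraidedHomBialgebra k μ Δ α R)
    (hinv : ∀ x y : A, R (α x) (α y) = R x y)
    (αU : U →ₗ[k] U) (ρU : U →ₗ[k] A ⊗[k] U) (hU : IsComodule k Δ α αU ρU)
    (αV : V →ₗ[k] V) (ρV : V →ₗ[k] A ⊗[k] V) (hV : IsComodule k Δ α αV ρV)
    (αW : W →ₗ[k] W) (ρW : W →ₗ[k] A ⊗[k] W) (hW : IsComodule k Δ α αW ρW) :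
    (TensorProduct.assoc k W V U).symm.toLinearMap
        ∘ₗ TensorProduct.map αW (Bmap k R ρU ρV)
        ∘ₗ (TensorProduct.assoc k W U V).toLinearMap
        ∘ₗ TensorProduct.map (Bmap k R ρU ρW) αV
        ∘ₗ (TensorProduct.assoc k U W V).symm.toLinearMap
        ∘ₗ TensorProduct.map αU (Bmap k R ρV ρW)
        ∘ₗ (TensorProduct.assoc k U V W).toLinearMap
      = TensorProduct.map (Bmap k R ρV ρW) αU
        ∘ₗ (TensorProduct.assoc k V W U).symm.toLinearMap
        ∘ₗ TensorProduct.map αV (Bmap k R ρU ρW)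
        ∘ₗ (TensorProduct.assoc k V U W).toLinearMap
        ∘ₗ TensorProduct.map (Bmap k R ρU ρV) αW := by
  refine TensorProduct.ext_threefold fun u v w => ?_
  rw [mixedHYBE_left_tmul_eq_sum_comul hinv hU hV hW,
    mixedHYBE_right_tmul_eq_sum_comul hinv hU hV hW]
  simp only [h.sum_R_yangBaxter hinv]
end

section
/- Let (A, μ, Δ, α, R) be a cobraided Hom-bialgebra over a commutative ring k whose Hom-cobraiding form R is α-invariant, and let (V, α_V) be an A-comodule with structure map ρ, written ρ(v) = Σ v_A ⊗ v_V. Then the map B_{V,V} : V ⊗ V → V ⊗ V defined by B_{V,V}(v ⊗ w) = Σ R(w_A ⊗ v_A) w_V ⊗ v_V is a solution of the Hom-Yang-Baxter equation for (V, α_V); that is, B_{V,V} commutes with α_V ⊗ α_V and (α_V ⊗ B_{V,V})∘(B_{V,V} ⊗ α_V)∘(α_V ⊗ B_{V,V}) = (B_{V,V} ⊗ α_V)∘(α_V ⊗ B_{V,V})∘(B_{V,V} ⊗ α_V). -/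
open TensorProduct

/-!
Evaluate both sides of the Hom-Yang-Baxter equation on `u ⊗ v ⊗ w`. Each time `B` acts on a
Sweedler component `x_V` of an earlier coaction it brings in `ρ(x_V)`, while, by α-invariance of
`R`, the matching coefficient enters as `α(x_A)`; Hom-coassociativity of `ρ` trades
`Σ α(x_A) ⊗ ρ(x_V)` for `Σ Δ(x_A) ⊗ α_V(x_V)`, so no iterated coaction survives. Both sides then
read `Σ T(u_A, v_A, w_A) • α²w_V ⊗ α²v_V ⊗ α²u_V`, with `T` the left, respectively the right,
side of the Yang-Baxter relation `Σ R(c₁,b₁) R(c₂,a₁) R(b₂,a₂) = Σ R(b₁,a₁) R(c₁,a₂) R(c₂,b₂)`.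
That relation is axiom (iii) for `(b, a)` paired with `R(α²c, -)` and expanded by axiom (ii).
-/

section Pairing

variable {k A W W' : Type*} [CommRing k] [AddCommGroup A] [Module k A]
  [AddCommGroup W] [Module k W] [AddCommGroup W'] [Module k W']

noncomputable def braidingPairing (R : A →ₗ[k] A →ₗ[k] k) :
    (A ⊗[k] W) ⊗[k] (A ⊗[k] W') →ₗ[k] W ⊗[k] W' :=
  (TensorProduct.lid k (W ⊗[k] W')).toLinearMap
    ∘ₗ TensorProduct.map (TensorProduct.lift R) LinearMap.id
    ∘ₗ (TensorProduct.tensorTensorTensorComm k A W A W').toLinearMap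

@[simp]
theorem braidingPairing_tmul (R : A →ₗ[k] A →ₗ[k] k) (c b : A) (w : W) (v : W') :
    braidingPairing R ((c ⊗ₜ[k] w) ⊗ₜ[k] (b ⊗ₜ[k] v)) = R c b • (w ⊗ₜ[k] v) := by
  simp [braidingPairing]

theorem braidingPairing_comp_map_map {W₁ W₁' : Type*} [AddCommGroup W₁] [Module k W₁]
    [AddCommGroup W₁'] [Module k W₁'] {R : A →ₗ[k] A →ₗ[k] k} {α : A →ₗ[k] A}
    (hR : ∀ x y, R (α x) (α y) = R x y) (f : W →ₗ[k] W₁) (g : W' →ₗ[k] W₁') :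
    braidingPairing R ∘ₗ map (map α f) (map α g) = map f g ∘ₗ braidingPairing R := by
  ext c w b v
  simp [hR]

end Pairing

section Braiding

variable {k A V W : Type*} [CommRing k] [AddCommGroup A] [Module k A]
  [AddCommGroup V] [Module k V] [AddCommGroup W] [Module k W]

theorem Bmap_tmul_s14 (R : A →ₗ[k] A →ₗ[k] k) (ρV : V →ₗ[k] A ⊗[k] V) (ρW : W →ₗ[k] A ⊗[k] W)
    (v : V) (w : W) : Bmap k R ρV ρW (v ⊗ₜ w) = braidingPairing R (ρW w ⊗ₜ ρV v) :=
  rfl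

theorem Bmap_comp_map {R : A →ₗ[k] A →ₗ[k] k} {α : A →ₗ[k] A} {αV : V →ₗ[k] V}
    {αW : W →ₗ[k] W} {ρV : V →ₗ[k] A ⊗[k] V} {ρW : W →ₗ[k] A ⊗[k] W}
    (hR : ∀ x y, R (α x) (α y) = R x y)
    (hρV : map α αV ∘ₗ ρV = ρV ∘ₗ αV) (hρW : map α αW ∘ₗ ρW = ρW ∘ₗ αW) :
    Bmap k R ρV ρW ∘ₗ map αV αW = map αW αV ∘ₗ Bmap k R ρV ρW := by
  refine TensorProduct.ext' fun v w => ?_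
  have hv := LinearMap.congr_fun hρV v
  have hw := LinearMap.congr_fun hρW w
  simp only [LinearMap.comp_apply, map_tmul, Bmap_tmul_s14] at hv hw ⊢
  rw [← hv, ← hw, ← map_tmul, ← LinearMap.comp_apply (braidingPairing R),
    braidingPairing_comp_map_map hR, LinearMap.comp_apply]

end Braiding

section Comodule

variable {k A V M : Type*} [CommRing k] [AddCommGroup A] [Module k A]
  [AddCommGroup V] [Module k V] [AddCommGroup M] [Module k M]
  {Δ : A →ₗ[k] A ⊗[k] A} {α : A →ₗ[k] A} {αV : V →ₗ[k] V} {ρ : V →ₗ[k] A ⊗[k] V}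

theorem IsComodule.coaction_twist_eq_sum (hV : IsComodule k Δ α αV ρ) {x : V} {n : ℕ}
    {a : Fin n → A} {x' : Fin n → V} (hx : ρ x = ∑ i, a i ⊗ₜ x' i) :
    ρ (αV x) = ∑ i, α (a i) ⊗ₜ αV (x' i) := by
  rw [← LinearMap.comp_apply, ← hV.2]
  simp [hx]

theorem IsComodule.sum_map_tmul_coaction (hV : IsComodule k Δ α αV ρ) {x : V} {n : ℕ}
    {a : Fin n → A} {x' : Fin n → V} (hx : ρ x = ∑ i, a i ⊗ₜ x' i)
    {m : Fin n → ℕ} {a₁ a₂ : ∀ i, Fin (m i) → A} (ha : ∀ i, Δ (a i) = ∑ d, a₁ i d ⊗ₜ a₂ i d)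
    (Φ : A ⊗[k] (A ⊗[k] V) →ₗ[k] M) :
    ∑ i, Φ (α (a i) ⊗ₜ ρ (x' i)) = ∑ i, ∑ d, Φ (a₁ i d ⊗ₜ (a₂ i d ⊗ₜ αV (x' i))) := by
  simpa [hx, ha, sum_tmul] using congr(Φ $(LinearMap.congr_fun hV.1 x)).symm

theorem IsComodule.sum_smul_coaction (hV : IsComodule k Δ α αV ρ) {x : V} {n : ℕ}
    {a : Fin n → A} {x' : Fin n → V} (hx : ρ x = ∑ i, a i ⊗ₜ x' i)
    {m : Fin n → ℕ} {a₁ a₂ : ∀ i, Fin (m i) → A} (ha : ∀ i, Δ (a i) = ∑ d, a₁ i d ⊗ₜ a₂ i d)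
    (f : A →ₗ[k] k) (Φ : A ⊗[k] V →ₗ[k] M) :
    ∑ i, f (α (a i)) • Φ (ρ (x' i)) = ∑ i, ∑ d, f (a₁ i d) • Φ (a₂ i d ⊗ₜ αV (x' i)) := by
  simpa using hV.sum_map_tmul_coaction hx ha (lift (f.smulRight Φ))

end Comodule

section Absorption

variable {k A V W : Type*} [CommRing k] [AddCommGroup A] [Module k A]
  [AddCommGroup V] [Module k V] [AddCommGroup W] [Module k W]
  {Δ : A →ₗ[k] A ⊗[k] A} {α : A →ₗ[k] A} {αV : V →ₗ[k] V} {αW : W →ₗ[k] W}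
  {ρV : V →ₗ[k] A ⊗[k] V} {ρW : W →ₗ[k] A ⊗[k] W} (R : A →ₗ[k] A →ₗ[k] k)
  {x : V} {na : ℕ} {a : Fin na → A} {x' : Fin na → V}
  {ma : Fin na → ℕ} {a₁ a₂ : ∀ i, Fin (ma i) → A}
  {y : W} {nb : ℕ} {b : Fin nb → A} {y' : Fin nb → W}
  {mb : Fin nb → ℕ} {b₁ b₂ : ∀ j, Fin (mb j) → A}

theorem IsComodule.sum_smul_Bmap_tmul_left (hV : IsComodule k Δ α αV ρV)
    (hx : ρV x = ∑ i, a i ⊗ₜ x' i) (ha : ∀ i, Δ (a i) = ∑ d, a₁ i d ⊗ₜ a₂ i d)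
    (hy : ρW y = ∑ j, b j ⊗ₜ y' j) (f : A →ₗ[k] k) :
    ∑ i, f (α (a i)) • Bmap k R ρV ρW (x' i ⊗ₜ y)
      = ∑ i, ∑ j, (∑ d, f (a₁ i d) * R (b j) (a₂ i d)) • (y' j ⊗ₜ αV (x' i)) := by
  have := hV.sum_smul_coaction hx ha f (braidingPairing R ∘ₗ TensorProduct.mk k _ _ (ρW y))
  simp only [Finset.sum_smul]
  rw [Finset.sum_congr rfl fun i _ => Finset.sum_comm]
  simpa [Bmap_tmul_s14, hy, sum_tmul, Finset.smul_sum, smul_smul] using this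

theorem IsComodule.sum_smul_Bmap_tmul_right (hW : IsComodule k Δ α αW ρW)
    (hx : ρV x = ∑ i, a i ⊗ₜ x' i)
    (hy : ρW y = ∑ j, b j ⊗ₜ y' j) (hb : ∀ j, Δ (b j) = ∑ e, b₁ j e ⊗ₜ b₂ j e)
    (f : A →ₗ[k] k) :
    ∑ j, f (α (b j)) • Bmap k R ρV ρW (x ⊗ₜ y' j)
      = ∑ j, ∑ i, (∑ e, f (b₁ j e) * R (b₂ j e) (a i)) • (αW (y' j) ⊗ₜ x' i) := by
  have := hW.sum_smul_coaction hy hb f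
    (braidingPairing R ∘ₗ (TensorProduct.mk k _ _).flip (ρV x))
  simp only [Finset.sum_smul]
  rw [Finset.sum_congr rfl fun j _ => Finset.sum_comm]
  simpa [Bmap_tmul_s14, hx, tmul_sum, Finset.smul_sum, smul_smul] using this

theorem sum_sum_smul_Bmap_tmul (hV : IsComodule k Δ α αV ρV) (hW : IsComodule k Δ α αW ρW)
    (hx : ρV x = ∑ i, a i ⊗ₜ x' i) (ha : ∀ i, Δ (a i) = ∑ d, a₁ i d ⊗ₜ a₂ i d)
    (hy : ρW y = ∑ j, b j ⊗ₜ y' j) (hb : ∀ j, Δ (b j) = ∑ e, b₁ j e ⊗ₜ b₂ j e)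
    (F : A →ₗ[k] A →ₗ[k] k) :
    ∑ i, ∑ j, F (α (a i)) (α (b j)) • Bmap k R ρV ρW (x' i ⊗ₜ y' j)
      = ∑ i, ∑ j, (∑ d, ∑ e, F (a₁ i d) (b₁ j e) * R (b₂ j e) (a₂ i d)) •
          (αW (y' j) ⊗ₜ αV (x' i)) := by
  let Ψ : A ⊗[k] (A ⊗[k] V) →ₗ[k] W ⊗[k] V := TensorProduct.lift <|
    ∑ j, ∑ e, (F.flip (b₁ j e)).smulRight
      (braidingPairing R ∘ₗ TensorProduct.mk k _ _ (b₂ j e ⊗ₜ αW (y' j)))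
  have hΨ (i : Fin na) : ∑ j, F (α (a i)) (α (b j)) • Bmap k R ρV ρW (x' i ⊗ₜ y' j)
      = Ψ (α (a i) ⊗ₜ ρV (x' i)) := by
    simpa [Ψ, Bmap_tmul_s14] using hW.sum_smul_coaction hy hb (F (α (a i)))
      (braidingPairing R ∘ₗ (TensorProduct.mk k _ _).flip (ρV (x' i)))
  rw [Finset.sum_congr rfl fun i _ => hΨ i, hV.sum_map_tmul_coaction hx ha Ψ]
  simp only [Ψ, lift.tmul, LinearMap.coe_sum, LinearMap.coe_smulRight, LinearMap.flip_apply,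
    Finset.sum_apply, LinearMap.coe_smul, LinearMap.coe_comp, Pi.smul_apply, Function.comp_apply,
    mk_apply, braidingPairing_tmul, smul_smul, Finset.sum_smul]
  refine Finset.sum_congr rfl fun i _ => ?_
  rw [Finset.sum_comm]

end Absorption

section Cobraided

variable {k A : Type*} [CommRing k] [AddCommGroup A] [Module k A]
  {μ : A →ₗ[k] A →ₗ[k] A} {Δ : A →ₗ[k] A ⊗[k] A} {α : A →ₗ[k] A} {R : A →ₗ[k] A →ₗ[k] k}

theorem IsCobraidedHomBialgebra.yangBaxter (h : IsCobraidedHomBialgebra k μ Δ α R)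
    (hR : ∀ x y, R (α x) (α y) = R x y) {a b c : A} {na nb nc : ℕ}
    {a₁ a₂ : Fin na → A} {b₁ b₂ : Fin nb → A} {c₁ c₂ : Fin nc → A}
    (ha : Δ a = ∑ d, a₁ d ⊗ₜ a₂ d) (hb : Δ b = ∑ e, b₁ e ⊗ₜ b₂ e)
    (hc : Δ c = ∑ f, c₁ f ⊗ₜ c₂ f) :
    ∑ d, ∑ e, ∑ f, R (c₁ f) (b₁ e) * R (c₂ f) (a₁ d) * R (b₂ e) (a₂ d)
      = ∑ d, ∑ e, ∑ f, R (b₁ e) (a₁ d) * R (c₁ f) (a₂ d) * R (c₂ f) (b₂ e) := by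
  have hΔα : Δ (α c) = ∑ f, α (c₁ f) ⊗ₜ α (c₂ f) := by
    rw [← LinearMap.comp_apply, ← h.1.2.2.1]
    simp [hc]
  have hRμ (y z : A) : R (α (α c)) (μ y z) = ∑ f, R (c₁ f) z * R (c₂ f) y := by
    simp [h.2.2.1 _ y z _ _ _ hΔα, hR]
  have := congr(R (α (α c)) $(h.2.2.2 b a _ _ _ _ _ _ hb ha))
  simp only [map_sum, map_smul, smul_eq_mul, hRμ, Finset.mul_sum] at this
  rw [Finset.sum_comm]
  conv_rhs => rw [Finset.sum_comm]
  convert this using 4 <;> ring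

end Cobraided

section HomYangBaxter

variable {k A V : Type*} [CommRing k] [AddCommGroup A] [Module k A]
  [AddCommGroup V] [Module k V]

noncomputable def braid₁₂ (αV : V →ₗ[k] V) (B : V ⊗[k] V →ₗ[k] V ⊗[k] V) :
    (V ⊗[k] V) ⊗[k] V →ₗ[k] (V ⊗[k] V) ⊗[k] V :=
  map B αV

noncomputable def braid₂₃ (αV : V →ₗ[k] V) (B : V ⊗[k] V →ₗ[k] V ⊗[k] V) :
    (V ⊗[k] V) ⊗[k] V →ₗ[k] (V ⊗[k] V) ⊗[k] V :=
  (TensorProduct.assoc k V V V).symm.toLinearMap ∘ₗ map αV B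
    ∘ₗ (TensorProduct.assoc k V V V).toLinearMap

theorem isHYBESolution_iff (αV : V →ₗ[k] V) (B : V ⊗[k] V →ₗ[k] V ⊗[k] V) :
    IsHYBESolution k αV B ↔ B ∘ₗ map αV αV = map αV αV ∘ₗ B ∧
      braid₂₃ αV B ∘ₗ braid₁₂ αV B ∘ₗ braid₂₃ αV B
        = braid₁₂ αV B ∘ₗ braid₂₃ αV B ∘ₗ braid₁₂ αV B :=
  Iff.rfl

variable {Δ : A →ₗ[k] A ⊗[k] A} {α : A →ₗ[k] A} {αV : V →ₗ[k] V} {ρ : V →ₗ[k] A ⊗[k] V}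
  {R : A →ₗ[k] A →ₗ[k] k}
  {u v w : V} {na nb nc : ℕ} {a : Fin na → A} {b : Fin nb → A} {c : Fin nc → A}
  {u' : Fin na → V} {v' : Fin nb → V} {w' : Fin nc → V}
  {ma : Fin na → ℕ} {mb : Fin nb → ℕ} {mc : Fin nc → ℕ}
  {a₁ a₂ : ∀ i, Fin (ma i) → A} {b₁ b₂ : ∀ j, Fin (mb j) → A} {c₁ c₂ : ∀ l, Fin (mc l) → A}

theorem braid₂₃_braid₁₂_braid₂₃_tmul (hR : ∀ x y, R (α x) (α y) = R x y)
    (hV : IsComodule k Δ α αV ρ)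
    (hu : ρ u = ∑ i, a i ⊗ₜ u' i) (hv : ρ v = ∑ j, b j ⊗ₜ v' j) (hw : ρ w = ∑ l, c l ⊗ₜ w' l)
    (ha : ∀ i, Δ (a i) = ∑ d, a₁ i d ⊗ₜ a₂ i d) (hb : ∀ j, Δ (b j) = ∑ e, b₁ j e ⊗ₜ b₂ j e)
    (hc : ∀ l, Δ (c l) = ∑ f, c₁ l f ⊗ₜ c₂ l f) :
    braid₂₃ αV (Bmap k R ρ ρ) (braid₁₂ αV (Bmap k R ρ ρ) (braid₂₃ αV (Bmap k R ρ ρ)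
      ((u ⊗ₜ v) ⊗ₜ w)))
      = ∑ i, ∑ j, ∑ l,
          (∑ d, ∑ e, ∑ f, R (c₁ l f) (b₁ j e) * R (c₂ l f) (a₁ i d) * R (b₂ j e) (a₂ i d)) •
            ((αV (αV (w' l)) ⊗ₜ αV (αV (v' j))) ⊗ₜ αV (αV (u' i))) := by
  have h₁ : braid₂₃ αV (Bmap k R ρ ρ) ((u ⊗ₜ v) ⊗ₜ w)
      = ∑ j, ∑ l, R (c l) (b j) • ((αV u ⊗ₜ w' l) ⊗ₜ v' j) := by
    simp [braid₂₃, Bmap_tmul_s14, hv, hw, tmul_sum, sum_tmul, tmul_smul]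
  have h₂ : braid₁₂ αV (Bmap k R ρ ρ) (∑ j, ∑ l, R (c l) (b j) • ((αV u ⊗ₜ w' l) ⊗ₜ v' j))
      = ∑ j, ∑ l, ∑ i, (∑ f, R (c₁ l f) (α (b j)) * R (c₂ l f) (α (a i))) •
          ((αV (w' l) ⊗ₜ αV (u' i)) ⊗ₜ αV (v' j)) := by
    calc _ = ∑ j, (∑ l, R.flip (α (b j)) (α (c l)) • Bmap k R ρ ρ (αV u ⊗ₜ w' l))
              ⊗ₜ αV (v' j) := by
          simp [braid₁₂, hR, sum_tmul, ← smul_tmul']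
      _ = _ := by
          simp_rw [hV.sum_smul_Bmap_tmul_right R (hV.coaction_twist_eq_sum hu) hw hc]
          simp [sum_tmul, smul_tmul']
  have hB (x y : V) : Bmap k R ρ ρ (αV x ⊗ₜ αV y) = map αV αV (Bmap k R ρ ρ (x ⊗ₜ y)) :=
    LinearMap.congr_fun (Bmap_comp_map hR hV.2 hV.2) (x ⊗ₜ y)
  have h₃ : braid₂₃ αV (Bmap k R ρ ρ) (∑ j, ∑ l, ∑ i,
        (∑ f, R (c₁ l f) (α (b j)) * R (c₂ l f) (α (a i))) •
          ((αV (w' l) ⊗ₜ αV (u' i)) ⊗ₜ αV (v' j)))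
      = ∑ l, (TensorProduct.assoc k V V V).symm (αV (αV (w' l)) ⊗ₜ map αV αV
          (∑ i, ∑ j, (∑ f, (R (c₂ l f)).smulRight (R (c₁ l f))) (α (a i)) (α (b j)) •
            Bmap k R ρ ρ (u' i ⊗ₜ v' j))) := by
    simp only [braid₂₃, Finset.sum_smul, map_sum, map_smul, LinearMap.coe_comp,
      LinearEquiv.coe_coe, Function.comp_apply, assoc_tmul, map_tmul, hB, LinearMap.coe_sum,
      LinearMap.coe_smulRight, Finset.sum_apply, LinearMap.coe_smul, Pi.smul_apply, smul_eq_mul,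
      mul_comm, tmul_sum, tmul_smul]
    rw [Finset.sum_comm]
    refine Finset.sum_congr rfl fun l _ => ?_
    rw [Finset.sum_comm]
  rw [h₁, h₂, h₃]
  simp_rw [sum_sum_smul_Bmap_tmul R hV hV hu ha hv hb]
  simp only [map_sum, map_smul, tmul_sum, tmul_smul, map_tmul, assoc_symm_tmul,
    LinearMap.sum_apply, LinearMap.smulRight_apply, LinearMap.smul_apply, smul_eq_mul,
    Finset.sum_mul, mul_comm (R (c₂ _ _) _)]
  rw [Finset.sum_comm]
  refine Finset.sum_congr rfl fun i _ => ?_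
  rw [Finset.sum_comm]

theorem braid₁₂_braid₂₃_braid₁₂_tmul (hR : ∀ x y, R (α x) (α y) = R x y)
    (hV : IsComodule k Δ α αV ρ)
    (hu : ρ u = ∑ i, a i ⊗ₜ u' i) (hv : ρ v = ∑ j, b j ⊗ₜ v' j) (hw : ρ w = ∑ l, c l ⊗ₜ w' l)
    (ha : ∀ i, Δ (a i) = ∑ d, a₁ i d ⊗ₜ a₂ i d) (hb : ∀ j, Δ (b j) = ∑ e, b₁ j e ⊗ₜ b₂ j e)
    (hc : ∀ l, Δ (c l) = ∑ f, c₁ l f ⊗ₜ c₂ l f) :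
    braid₁₂ αV (Bmap k R ρ ρ) (braid₂₃ αV (Bmap k R ρ ρ) (braid₁₂ αV (Bmap k R ρ ρ)
      ((u ⊗ₜ v) ⊗ₜ w)))
      = ∑ i, ∑ j, ∑ l,
          (∑ d, ∑ e, ∑ f, R (b₁ j e) (a₁ i d) * R (c₁ l f) (a₂ i d) * R (c₂ l f) (b₂ j e)) •
            ((αV (αV (w' l)) ⊗ₜ αV (αV (v' j))) ⊗ₜ αV (αV (u' i))) := by
  have hB (x y : V) : Bmap k R ρ ρ (αV x ⊗ₜ αV y) = map αV αV (Bmap k R ρ ρ (x ⊗ₜ y)) :=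
    LinearMap.congr_fun (Bmap_comp_map hR hV.2 hV.2) (x ⊗ₜ y)
  have h₁ : braid₁₂ αV (Bmap k R ρ ρ) ((u ⊗ₜ v) ⊗ₜ w)
      = ∑ j, ∑ i, R (b j) (a i) • ((v' j ⊗ₜ u' i) ⊗ₜ αV w) := by
    simp only [braid₁₂, map_tmul, Bmap_tmul_s14, hv, hu, tmul_sum, sum_tmul, map_sum,
      braidingPairing_tmul, smul_tmul']
    rw [Finset.sum_comm]
  have h₂ : braid₂₃ αV (Bmap k R ρ ρ) (∑ j, ∑ i, R (b j) (a i) • ((v' j ⊗ₜ u' i) ⊗ₜ αV w))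
      = ∑ j, ∑ i, ∑ l, (∑ d, R (α (b j)) (a₁ i d) * R (α (c l)) (a₂ i d)) •
          ((αV (v' j) ⊗ₜ αV (w' l)) ⊗ₜ αV (u' i)) := by
    calc _ = ∑ j, (TensorProduct.assoc k V V V).symm (αV (v' j) ⊗ₜ
              ∑ i, R (α (b j)) (α (a i)) • Bmap k R ρ ρ (u' i ⊗ₜ αV w)) := by
          simp [braid₂₃, hR, tmul_sum]
      _ = _ := by
          simp_rw [hV.sum_smul_Bmap_tmul_left R hu ha (hV.coaction_twist_eq_sum hw)]
          simp [tmul_sum]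
  have h₃ : braid₁₂ αV (Bmap k R ρ ρ) (∑ j, ∑ i, ∑ l,
        (∑ d, R (α (b j)) (a₁ i d) * R (α (c l)) (a₂ i d)) •
          ((αV (v' j) ⊗ₜ αV (w' l)) ⊗ₜ αV (u' i)))
      = ∑ i, map αV αV (∑ j, ∑ l,
          (∑ d, (R.flip (a₁ i d)).smulRight (R.flip (a₂ i d))) (α (b j)) (α (c l)) •
            Bmap k R ρ ρ (v' j ⊗ₜ w' l)) ⊗ₜ αV (αV (u' i)) := by
    simp only [braid₁₂, Finset.sum_smul, map_sum, map_smul, map_tmul, hB, LinearMap.coe_sum,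
      LinearMap.coe_smulRight, LinearMap.flip_apply, Finset.sum_apply, LinearMap.coe_smul,
      Pi.smul_apply, smul_eq_mul, sum_tmul, ← smul_tmul']
    rw [Finset.sum_comm]
  rw [h₁, h₂, h₃]
  simp_rw [sum_sum_smul_Bmap_tmul R hV hV hv hb hw hc]
  simp only [map_sum, map_smul, sum_tmul, smul_tmul', map_tmul, LinearMap.sum_apply,
    LinearMap.smulRight_apply, LinearMap.smul_apply, LinearMap.flip_apply, smul_eq_mul,
    Finset.sum_mul]
  refine Finset.sum_congr rfl fun i _ => Finset.sum_congr rfl fun j _ =>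
    Finset.sum_congr rfl fun l _ => ?_
  rw [Finset.sum_comm_cycle]

end HomYangBaxter

/-- Corollary 7.5: every comodule over a cobraided Hom-bialgebra
with `α`-invariant `R` yields a solution `B_{V,V}` of the HYBE. -/
theorem comodule_gives_HYBE_solution
    (k : Type*) {A V : Type*} [CommRing k] [AddCommGroup A] [Module k A]
    [AddCommGroup V] [Module k V]
    (μ : A →ₗ[k] A →ₗ[k] A) (Δ : A →ₗ[k] A ⊗[k] A) (α : A →ₗ[k] A)
    (R : A →ₗ[k] A →ₗ[k] k)
    (h : IsCobraidedHomBialgebra k μ Δ α R)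
    (hinv : ∀ x y : A, R (α x) (α y) = R x y)
    (αV : V →ₗ[k] V) (ρV : V →ₗ[k] A ⊗[k] V) (hV : IsComodule k Δ α αV ρV) :
    IsHYBESolution k αV (Bmap k R ρV ρV) := by
  refine (isHYBESolution_iff _ _).2
    ⟨Bmap_comp_map hinv hV.2 hV.2, TensorProduct.ext_threefold fun u v w => ?_⟩
  obtain ⟨na, a, u', hu⟩ := exists_sum_tmul_eq (ρV u)
  obtain ⟨nb, b, v', hv⟩ := exists_sum_tmul_eq (ρV v)
  obtain ⟨nc, c, w', hw⟩ := exists_sum_tmul_eq (ρV w)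
  choose ma a₁ a₂ ha using fun i => exists_sum_tmul_eq (Δ (a i))
  choose mb b₁ b₂ hb using fun j => exists_sum_tmul_eq (Δ (b j))
  choose mc c₁ c₂ hc using fun l => exists_sum_tmul_eq (Δ (c l))
  simp only [LinearMap.comp_apply]
  rw [braid₂₃_braid₁₂_braid₂₃_tmul hinv hV hu hv hw ha hb hc,
    braid₁₂_braid₂₃_braid₁₂_tmul hinv hV hu hv hw ha hb hc]
  refine Finset.sum_congr rfl fun i _ => Finset.sum_congr rfl fun j _ =>
    Finset.sum_congr rfl fun l _ => ?_
  rw [h.yangBaxter hinv (ha i) (hb j) (hc l)]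
end
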